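/- arXiv:0901.4525 — 9 statements merged into one kernel-verified Lean document; each statement's English description precedes it below -/
import Mathlib

section
/- Let F be an algebraically closed field of characteristic p > 0 and let L be a finite-dimensional transitive irreducible ℤ-graded Lie algebra over F. Let V be an L_0-submodule of L_1 (an F-subspace V ⊆ L_1 with [L_0, V] ⊆ V) and suppose that L_0 does not act faithfully on V, i.e. there exists a nonzero z ∈ L_0 with [z, V] = 0. Then [V, V] = 0 and [[L_{-1}, V], V] = 0. -/
/-- Let `F` be an algebraically closed field of characteristic `p > 0` and let
`L` be a finite-dimensional transitive irreducible `ℤ`-graded Lie algebra over `F`.  Let `V` be an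
`L₀`-submodule of `L₁` on which `L₀` does not act faithfully.  Then `[V, V] = 0` and
`[[L₋₁, V], V] = 0`. -/
theorem stmt_0 {F L : Type*} [Field F] [IsAlgClosed F] [LieRing L] [LieAlgebra F L]
    (p : ℕ) [CharP F p] (hp : 0 < p) [FiniteDimensional F L]
    (Lgr : ℤ → Submodule F L)
    (hdirect : DirectSum.IsInternal Lgr)
    (hbracket : ∀ i j : ℤ, ∀ x ∈ Lgr i, ∀ y ∈ Lgr j, ⁅x, y⁆ ∈ Lgr (i + j))
    (htrans : ∀ i : ℤ, 0 ≤ i → ∀ x ∈ Lgr i, (∀ y ∈ Lgr (-1), ⁅x, y⁆ = 0) → x = 0)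
    (hne : Lgr (-1) ≠ ⊥)
    (hirr : ∀ W : Submodule F L, W ≤ Lgr (-1) →
      (∀ z ∈ Lgr 0, ∀ w ∈ W, ⁅z, w⁆ ∈ W) → W = ⊥ ∨ W = Lgr (-1))
    (hgen : ∀ i : ℤ, 1 < i →
      Lgr (-i) = Submodule.span F {m | ∃ x ∈ Lgr (-1), ∃ y ∈ Lgr (-i + 1), m = ⁅x, y⁆})
    (V : Submodule F L) (hV1 : V ≤ Lgr 1)
    (hVmod : ∀ z ∈ Lgr 0, ∀ v ∈ V, ⁅z, v⁆ ∈ V)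
    (hfaith : ∃ z ∈ Lgr 0, z ≠ 0 ∧ ∀ v ∈ V, ⁅z, v⁆ = 0) :
    (∀ v ∈ V, ∀ w ∈ V, ⁅v, w⁆ = 0) ∧
      (∀ x ∈ Lgr (-1), ∀ v ∈ V, ∀ w ∈ V, ⁅⁅x, v⁆, w⁆ = 0) := by

  obtain ⟨z, hz0, hzne, hzann⟩ := hfaith
  -- the set of generators: brackets of annihilating elements of `L₀` with `L₋₁`
  set S : Set L := {m | ∃ k, (k ∈ Lgr 0 ∧ ∀ v ∈ V, ⁅k, v⁆ = 0) ∧ ∃ y ∈ Lgr (-1), m = ⁅k, y⁆}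
    with hS
  set W : Submodule F L := Submodule.span F S with hW
  have hWle : W ≤ Lgr (-1) := by
    rw [hW, Submodule.span_le]
    rintro m ⟨k, ⟨hk0, -⟩, y, hy, rfl⟩
    have := hbracket 0 (-1) k hk0 y hy
    simpa using this
  have hWinv : ∀ z' ∈ Lgr 0, ∀ w ∈ W, ⁅z', w⁆ ∈ W := by
    intro z' hz' w hw
    induction hw using Submodule.span_induction with
    | mem m hm =>
      obtain ⟨k, ⟨hk0, hkann⟩, y, hy, rfl⟩ := hm
      have h1 : ⁅z', ⁅k, y⁆⁆ = ⁅⁅z', k⁆, y⁆ + ⁅k, ⁅z', y⁆⁆ := by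
        rw [leibniz_lie]
      rw [h1]
      refine add_mem ?_ ?_
      · refine Submodule.subset_span ⟨⁅z', k⁆, ⟨?_, ?_⟩, y, hy, rfl⟩
        · simpa using hbracket 0 0 z' hz' k hk0
        · intro v hv
          have h2 : ⁅⁅z', k⁆, v⁆ = ⁅z', ⁅k, v⁆⁆ - ⁅k, ⁅z', v⁆⁆ := lie_lie z' k v
          rw [h2, hkann v hv, hkann _ (hVmod z' hz' v hv), lie_zero, sub_zero]
      · refine Submodule.subset_span ⟨k, ⟨hk0, hkann⟩, ⁅z', y⁆, ?_, rfl⟩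
        simpa using hbracket 0 (-1) z' hz' y hy
    | zero => simpa using (Submodule.zero_mem W)
    | add a b _ _ ha hb => rw [lie_add]; exact add_mem ha hb
    | smul c a _ ha => rw [lie_smul]; exact Submodule.smul_mem _ _ ha
  have hWeq : W = Lgr (-1) := by
    rcases hirr W hWle hWinv with h | h
    · exfalso
      apply hzne
      refine htrans 0 le_rfl z hz0 ?_
      intro y hy
      have : ⁅z, y⁆ ∈ W := Submodule.subset_span ⟨z, ⟨hz0, hzann⟩, y, hy, rfl⟩
      rw [h] at this
      simpa using this
    · exact h
  -- second claim
  have claim2 : ∀ x ∈ Lgr (-1), ∀ v ∈ V, ∀ w ∈ V, ⁅⁅x, v⁆, w⁆ = 0 := by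
    intro x hx v hv w hw
    rw [← hWeq] at hx
    induction hx using Submodule.span_induction with
    | mem m hm =>
      obtain ⟨k, ⟨hk0, hkann⟩, y, hy, rfl⟩ := hm
      have h1 : ⁅⁅k, y⁆, v⁆ = ⁅k, ⁅y, v⁆⁆ - ⁅y, ⁅k, v⁆⁆ := lie_lie k y v
      rw [h1, hkann v hv, lie_zero, sub_zero]
      have h2 : ⁅⁅k, ⁅y, v⁆⁆, w⁆ = ⁅k, ⁅⁅y, v⁆, w⁆⁆ - ⁅⁅y, v⁆, ⁅k, w⁆⁆ := lie_lie k ⁅y, v⁆ w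
      have hyv : ⁅y, v⁆ ∈ Lgr 0 := by simpa using hbracket (-1) 1 y hy v (hV1 hv)
      rw [h2, hkann w hw, lie_zero, sub_zero,
        hkann _ (hVmod ⁅y, v⁆ hyv w hw)]
    | zero => simp
    | add a b _ _ ha hb => rw [add_lie, add_lie, ha, hb, add_zero]
    | smul c a _ ha => rw [smul_lie, smul_lie, ha, smul_zero]
  refine ⟨?_, claim2⟩
  intro v hv w hw
  have hvw : ⁅v, w⁆ ∈ Lgr 2 := by
    simpa using hbracket 1 1 v (hV1 hv) w (hV1 hw)
  refine htrans 2 (by norm_num) _ hvw ?_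
  intro y hy
  have h1 : ⁅y, ⁅v, w⁆⁆ = ⁅⁅y, v⁆, w⁆ + ⁅v, ⁅y, w⁆⁆ := leibniz_lie y v w
  have h3 : ⁅v, ⁅y, w⁆⁆ = 0 := by
    rw [← lie_skew, claim2 y hy w hw v hv, neg_zero]
  have h4 : ⁅y, ⁅v, w⁆⁆ = 0 := by
    rw [h1, claim2 y hy v hv w hw, h3, add_zero]
  rw [← lie_skew, h4, neg_zero]
end

section
/- Let F be an algebraically closed field of characteristic p > 0 and let L be a finite-dimensional transitive irreducible ℤ-graded Lie algebra over F such that the only ideal of L contained in ⊕_{i<0} L_i is zero. Then L possesses a unique minimal ideal I, i.e. a nonzero ideal contained in every nonzero ideal of L; moreover I is a graded ideal, I = ⊕_{i∈ℤ} (I ∩ L_i), and I ∩ L_i = L_i for every i < 0. -/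
/-!
Filter `L` by degree, `L_{<b} = ⊕_{i<b} Lᵢ`, and let `J` be a nonzero ideal. By transitivity, for
`b ≥ 0` an element of `L_{<b+1}` whose brackets with `L₋₁` lie in `L_{<b-1}` already lies in
`L_{<b}`; so if every element of `J ∩ L_{<0}` lay in `L_{<-1}`, all of `J` would sink into
`L_{<-1}`, which is excluded. Hence the degree `-1` components of `J ∩ L_{<0}` form a nonzero
`L₀`-submodule of `L₋₁`, which by irreducibility is all of `L₋₁`, and since the negative part is
generated by `L₋₁` we get `L_k ⊆ J + L_{<k}` for every `k < 0`. Descending through the finitely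
many degrees gives `L_{<0} ⊆ J`. So the ideal generated by `L₋₁` lies in every nonzero ideal, and
it is graded because it is generated by homogeneous elements.
-/

namespace LieAlgebra.Graded

open LieSubmodule

variable {R L : Type*} [CommRing R] [LieRing L] [LieAlgebra R L] {Lgr : ℤ → Submodule R L}

def IsLieGrading (Lgr : ℤ → Submodule R L) : Prop :=
  ∀ i j : ℤ, ∀ x ∈ Lgr i, ∀ y ∈ Lgr j, ⁅x, y⁆ ∈ Lgr (i + j)

def degLT (Lgr : ℤ → Submodule R L) (b : ℤ) : Submodule R L :=
  ⨆ i < b, Lgr i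

lemma le_degLT {i b : ℤ} (h : i < b) : Lgr i ≤ degLT Lgr b :=
  le_iSup₂_of_le i h le_rfl

lemma degLT_mono : Monotone (degLT Lgr) :=
  fun _ _ hab => iSup₂_le fun _ hi => le_degLT (hi.trans_le hab)

lemma degLT_add_one (b : ℤ) : degLT Lgr (b + 1) = Lgr b ⊔ degLT Lgr b := by
  refine le_antisymm (iSup₂_le fun i hi => ?_) (sup_le (le_degLT (lt_add_one b))
    (degLT_mono (le_add_of_nonneg_right zero_le_one)))
  rcases (Int.lt_add_one_iff.mp hi).eq_or_lt with rfl | hlt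
  · exact le_sup_left
  · exact (le_degLT hlt).trans le_sup_right

lemma disjoint_degLT (hind : iSupIndep Lgr) (b : ℤ) : Disjoint (Lgr b) (degLT Lgr b) :=
  hind.disjoint_biSup (y := {i | i < b}) (lt_irrefl b)

lemma exists_degLT_eq_bot (hfin : {i | Lgr i ≠ ⊥}.Finite) : ∃ m ≤ 0, degLT Lgr m = ⊥ := by
  obtain ⟨m, hm⟩ := hfin.bddBelow
  refine ⟨min m 0, min_le_right m 0, eq_bot_iff.mpr (iSup₂_le fun i hi => ?_)⟩
  by_cases hi' : Lgr i = ⊥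
  · exact hi'.le
  · exact absurd (hm hi') (by omega)

lemma exists_degLT_eq_top (hfin : {i | Lgr i ≠ ⊥}.Finite) (htop : ⨆ i, Lgr i = ⊤) :
    ∃ M ≥ 0, degLT Lgr M = ⊤ := by
  obtain ⟨M, hM⟩ := hfin.bddAbove
  refine ⟨max (M + 1) 0, le_max_right _ _, eq_top_iff.mpr (htop ▸ iSup_le fun i => ?_)⟩
  by_cases hi : Lgr i = ⊥
  · exact hi ▸ bot_le
  · exact le_degLT ((Int.lt_add_one_iff.mpr (hM hi)).trans_le (le_max_left _ _))

lemma lie_mem_degLT (hgr : IsLieGrading Lgr) {j b : ℤ} {y x : L} (hy : y ∈ Lgr j)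
    (hx : x ∈ degLT Lgr b) : ⁅y, x⁆ ∈ degLT Lgr (j + b) := by
  suffices degLT Lgr b ≤ (degLT Lgr (j + b)).comap (LieModule.toEnd R L L y) from this hx
  exact iSup₂_le fun i hi z hz => le_degLT (by omega) (hgr j i y hy z hz)

lemma lie_mem_sup_degLT (hgr : IsLieGrading Lgr) (J : LieIdeal R L) {j b : ℤ} {y x : L}
    (hy : y ∈ Lgr j) (hx : x ∈ (J : Submodule R L) ⊔ degLT Lgr b) :
    ⁅y, x⁆ ∈ (J : Submodule R L) ⊔ degLT Lgr (j + b) := by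
  obtain ⟨u, hu, n, hn, rfl⟩ := Submodule.mem_sup.mp hx
  rw [lie_add]
  exact Submodule.add_mem_sup (J.lie_mem hu) (lie_mem_degLT hgr hy hn)

lemma mem_degLT_of_lie_mem (hgr : IsLieGrading Lgr) (hind : iSupIndep Lgr)
    (htrans : ∀ i : ℤ, 0 ≤ i → ∀ x ∈ Lgr i, (∀ y ∈ Lgr (-1), ⁅x, y⁆ = 0) → x = 0)
    {b : ℤ} (hb : 0 ≤ b) {x : L} (hx : x ∈ degLT Lgr (b + 1))
    (hlie : ∀ y ∈ Lgr (-1), ⁅x, y⁆ ∈ degLT Lgr (b - 1)) : x ∈ degLT Lgr b := by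
  rw [degLT_add_one] at hx
  obtain ⟨v, hv, n, hn, rfl⟩ := Submodule.mem_sup.mp hx
  suffices v = 0 by rwa [this, zero_add]
  refine htrans b hb v hv fun y hy => ?_
  have hvy_lt : ⁅v, y⁆ ∈ degLT Lgr (b - 1) := by
    have hny := lie_mem_degLT hgr hy hn
    rw [← lie_skew, neg_mem_iff, show -1 + b = b - 1 by ring] at hny
    simpa only [add_lie, add_sub_cancel_right] using sub_mem (hlie y hy) hny
  have hvy : ⁅v, y⁆ ∈ Lgr (b - 1) := by simpa only [← sub_eq_add_neg] using hgr b (-1) v hv y hy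
  exact Submodule.disjoint_def.mp (disjoint_degLT hind (b - 1)) _ hvy hvy_lt

lemma le_degLT_neg_one_of_inf_le (hgr : IsLieGrading Lgr) (hind : iSupIndep Lgr)
    (htrans : ∀ i : ℤ, 0 ≤ i → ∀ x ∈ Lgr i, (∀ y ∈ Lgr (-1), ⁅x, y⁆ = 0) → x = 0)
    (hfin : {i | Lgr i ≠ ⊥}.Finite) (htop : ⨆ i, Lgr i = ⊤) (J : LieIdeal R L)
    (hJ : (J : Submodule R L) ⊓ degLT Lgr 0 ≤ degLT Lgr (-1)) :
    (J : Submodule R L) ≤ degLT Lgr (-1) := by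
  have hstep : ∀ b, 0 ≤ b → (J : Submodule R L) ⊓ degLT Lgr b ≤ degLT Lgr (-1) := by
    refine Int.leInduction hJ fun b hb ih x hx => ?_
    refine ih ⟨hx.1, mem_degLT_of_lie_mem hgr hind htrans hb hx.2 fun y hy => ?_⟩
    have hxy := lie_mem_degLT hgr hy hx.2
    rw [← lie_skew, neg_mem_iff, show -1 + (b + 1) = b by ring] at hxy
    exact degLT_mono (by omega) (ih ⟨lie_mem_left R L J x y hx.1, hxy⟩)
  obtain ⟨M, hM, hMtop⟩ := exists_degLT_eq_top hfin htop
  simpa only [hMtop, inf_top_eq] using hstep M hM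

lemma degLT_zero_le_sup {J : Submodule R L} (hJ : ∀ k < 0, Lgr k ≤ J ⊔ degLT Lgr k) :
    ∀ m ≤ 0, degLT Lgr 0 ≤ J ⊔ degLT Lgr m := by
  refine Int.leInductionDown le_sup_right fun m hm ih => ih.trans (sup_le le_sup_left ?_)
  rw [← sub_add_cancel m 1, degLT_add_one, sub_add_cancel]
  exact sup_le (hJ _ (by omega)) le_sup_right

lemma grade_neg_one_le_sup_degLT (hgr : IsLieGrading Lgr) (hind : iSupIndep Lgr)
    (htrans : ∀ i : ℤ, 0 ≤ i → ∀ x ∈ Lgr i, (∀ y ∈ Lgr (-1), ⁅x, y⁆ = 0) → x = 0)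
    (hfin : {i | Lgr i ≠ ⊥}.Finite) (htop : ⨆ i, Lgr i = ⊤)
    (hirr : ∀ W : Submodule R L, W ≤ Lgr (-1) →
      (∀ z ∈ Lgr 0, ∀ w ∈ W, ⁅z, w⁆ ∈ W) → W = ⊥ ∨ W = Lgr (-1))
    (hrad : ∀ J : LieIdeal R L, (J : Submodule R L) ≤ ⨆ i < (0 : ℤ), Lgr i → J = ⊥)
    {J : LieIdeal R L} (hJ : J ≠ ⊥) : Lgr (-1) ≤ (J : Submodule R L) ⊔ degLT Lgr (-1) := by
  have hJlow : ¬ (J : Submodule R L) ⊓ degLT Lgr 0 ≤ degLT Lgr (-1) := fun h =>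
    hJ (hrad J ((le_degLT_neg_one_of_inf_le hgr hind htrans hfin htop J h).trans
      (degLT_mono (by norm_num))))
  obtain ⟨x, ⟨hxJ, hx0⟩, hx1⟩ := SetLike.not_le_iff_exists.mp hJlow
  rw [show (0 : ℤ) = -1 + 1 by norm_num, degLT_add_one] at hx0
  obtain ⟨w, hw, n, hn, rfl⟩ := Submodule.mem_sup.mp hx0
  set W := Lgr (-1) ⊓ ((J : Submodule R L) ⊔ degLT Lgr (-1))
  have hW_stable : ∀ z ∈ Lgr 0, ∀ u ∈ W, ⁅z, u⁆ ∈ W := fun z hz u hu =>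
    Submodule.mem_inf.mpr ⟨by simpa only [zero_add] using hgr 0 (-1) z hz u hu.1,
      by simpa only [zero_add] using lie_mem_sup_degLT hgr J hz hu.2⟩
  have hwW : w ∈ W := ⟨hw, by simpa using Submodule.add_mem_sup hxJ (neg_mem hn)⟩
  have hW_ne : W ≠ ⊥ := fun h => hx1 (by simpa [show w = 0 by simpa [h] using hwW] using hn)
  exact ((hirr W inf_le_left hW_stable).resolve_left hW_ne).symm.le.trans inf_le_right

lemma grade_le_sup_degLT (hgr : IsLieGrading Lgr)
    (hgen : ∀ i : ℤ, 1 < i →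
      Lgr (-i) = Submodule.span R {m | ∃ x ∈ Lgr (-1), ∃ y ∈ Lgr (-i + 1), m = ⁅x, y⁆})
    (J : LieIdeal R L) (h : Lgr (-1) ≤ (J : Submodule R L) ⊔ degLT Lgr (-1)) :
    ∀ k < 0, Lgr k ≤ (J : Submodule R L) ⊔ degLT Lgr k := by
  refine fun k hk => Int.leInductionDown h (fun k hk ih => ?_) k (by omega)
  have hk := hgen (1 - k) (by omega)
  rw [show -(1 - k) = k - 1 by ring, sub_add_cancel] at hk
  rw [hk, Submodule.span_le]
  rintro _ ⟨a, ha, b, hb, rfl⟩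
  simpa only [SetLike.mem_coe, show -1 + k = k - 1 by ring] using lie_mem_sup_degLT hgr J ha (ih hb)

theorem degLT_zero_le_of_ne_bot (hgr : IsLieGrading Lgr) (hind : iSupIndep Lgr)
    (htrans : ∀ i : ℤ, 0 ≤ i → ∀ x ∈ Lgr i, (∀ y ∈ Lgr (-1), ⁅x, y⁆ = 0) → x = 0)
    (hfin : {i | Lgr i ≠ ⊥}.Finite) (htop : ⨆ i, Lgr i = ⊤)
    (hirr : ∀ W : Submodule R L, W ≤ Lgr (-1) →
      (∀ z ∈ Lgr 0, ∀ w ∈ W, ⁅z, w⁆ ∈ W) → W = ⊥ ∨ W = Lgr (-1))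
    (hgen : ∀ i : ℤ, 1 < i →
      Lgr (-i) = Submodule.span R {m | ∃ x ∈ Lgr (-1), ∃ y ∈ Lgr (-i + 1), m = ⁅x, y⁆})
    (hrad : ∀ J : LieIdeal R L, (J : Submodule R L) ≤ ⨆ i < (0 : ℤ), Lgr i → J = ⊥)
    {J : LieIdeal R L} (hJ : J ≠ ⊥) : degLT Lgr 0 ≤ (J : Submodule R L) := by
  have hJ_neg := grade_le_sup_degLT hgr hgen J
    (grade_neg_one_le_sup_degLT hgr hind htrans hfin htop hirr hrad hJ)
  obtain ⟨m, hm, hm_bot⟩ := exists_degLT_eq_bot hfin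
  simpa only [hm_bot, sup_bot_eq] using degLT_zero_le_sup hJ_neg m hm

lemma lie_mem_of_forall_homogeneous (htop : ⨆ i, Lgr i = ⊤) {S : Submodule R L}
    (hS : ∀ j, ∀ y ∈ Lgr j, ∀ m ∈ S, ⁅y, m⁆ ∈ S) (x : L) {m : L} (hm : m ∈ S) : ⁅x, m⁆ ∈ S := by
  have hx : x ∈ ⨆ i, Lgr i := htop ▸ Submodule.mem_top
  induction hx using Submodule.iSup_induction' with
  | mem j y hy => exact hS j y hy m hm
  | zero => simp only [zero_lie, zero_mem]
  | add y z _ _ hy hz => simpa only [add_lie] using add_mem hy hz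

theorem lieSpan_eq_iSup_inf (htop : ⨆ i, Lgr i = ⊤) (hgr : IsLieGrading Lgr) {s : Set L}
    (hs : ∀ x ∈ s, ∃ i, x ∈ Lgr i) :
    (lieSpan R L s : Submodule R L) = ⨆ i, (lieSpan R L s : Submodule R L) ⊓ Lgr i := by
  set I := lieSpan R L s
  have hS : ∀ j, ∀ y ∈ Lgr j, ∀ m ∈ ⨆ i, (I : Submodule R L) ⊓ Lgr i,
      ⁅y, m⁆ ∈ ⨆ i, (I : Submodule R L) ⊓ Lgr i := by
    intro j y hy m hm
    induction hm using Submodule.iSup_induction' with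
    | mem i m hm => exact Submodule.mem_iSup_of_mem (j + i) ⟨I.lie_mem hm.1, hgr j i y hy m hm.2⟩
    | zero => simp only [lie_zero, zero_mem]
    | add m n _ _ hm hn => simpa only [lie_add] using add_mem hm hn
  let S : LieIdeal R L :=
    { toSubmodule := ⨆ i, (I : Submodule R L) ⊓ Lgr i
      lie_mem := fun {x _} hm => lie_mem_of_forall_homogeneous htop hS x hm }
  have hIS : I ≤ S := lieSpan_le.mpr fun x hx => by
    obtain ⟨i, hi⟩ := hs x hx
    exact Submodule.mem_iSup_of_mem i ⟨subset_lieSpan hx, hi⟩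
  exact le_antisymm hIS (iSup_le fun i => inf_le_left)

end LieAlgebra.Graded

open LieAlgebra.Graded in
theorem stmt_2_general {F L : Type*} [Field F] [LieRing L] [LieAlgebra F L]
    [FiniteDimensional F L]
    (Lgr : ℤ → Submodule F L)
    (hdirect : DirectSum.IsInternal Lgr)
    (hbracket : ∀ i j : ℤ, ∀ x ∈ Lgr i, ∀ y ∈ Lgr j, ⁅x, y⁆ ∈ Lgr (i + j))
    (htrans : ∀ i : ℤ, 0 ≤ i → ∀ x ∈ Lgr i, (∀ y ∈ Lgr (-1), ⁅x, y⁆ = 0) → x = 0)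
    (hne : Lgr (-1) ≠ ⊥)
    (hirr : ∀ W : Submodule F L, W ≤ Lgr (-1) →
      (∀ z ∈ Lgr 0, ∀ w ∈ W, ⁅z, w⁆ ∈ W) → W = ⊥ ∨ W = Lgr (-1))
    (hgen : ∀ i : ℤ, 1 < i →
      Lgr (-i) = Submodule.span F {m | ∃ x ∈ Lgr (-1), ∃ y ∈ Lgr (-i + 1), m = ⁅x, y⁆})
    (hrad : ∀ J : LieIdeal F L, (J : Submodule F L) ≤ ⨆ i < (0 : ℤ), Lgr i → J = ⊥) :
    ∃ I : LieIdeal F L, I ≠ ⊥ ∧ (∀ J : LieIdeal F L, J ≠ ⊥ → I ≤ J) ∧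
      ((I : Submodule F L) = ⨆ i : ℤ, (I : Submodule F L) ⊓ Lgr i) ∧
      (∀ i : ℤ, i < 0 → (I : Submodule F L) ⊓ Lgr i = Lgr i) := by
  have hind := hdirect.submodule_iSupIndep
  have htop := hdirect.submodule_iSup_eq_top
  have hneg_le : ∀ J : LieIdeal F L, J ≠ ⊥ → degLT Lgr 0 ≤ (J : Submodule F L) :=
    fun J => degLT_zero_le_of_ne_bot hbracket hind htrans
      (Submodule.finite_ne_bot_of_iSupIndep hind) htop hirr hgen hrad
  set I := LieSubmodule.lieSpan F L (Lgr (-1) : Set L)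
  have hI : I ≠ ⊥ := fun h => hne <| (Submodule.eq_bot_iff _).mpr <|
    (LieSubmodule.lieSpan_eq_bot_iff F L L).mp h
  refine ⟨I, hI, fun J hJ => LieSubmodule.lieSpan_le.mpr ?_,
    lieSpan_eq_iSup_inf htop hbracket fun x hx => ⟨-1, hx⟩,
    fun i hi => inf_eq_right.mpr ((le_degLT hi).trans (hneg_le I hI))⟩
  exact (le_degLT (by norm_num)).trans (hneg_le J hJ)

/-- Let `F` be an algebraically closed field of characteristic `p > 0` and let
`L` be a finite-dimensional transitive irreducible `ℤ`-graded Lie algebra over `F` such that the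
only ideal of `L` contained in `⊕_{i<0} Lᵢ` is zero.  Then `L` possesses a unique minimal ideal
`I` (a nonzero ideal contained in every nonzero ideal); moreover `I` is a graded ideal,
`I = ⊕ᵢ (I ∩ Lᵢ)`, and `I ∩ Lᵢ = Lᵢ` for every `i < 0`. -/
theorem stmt_2 {F L : Type*} [Field F] [IsAlgClosed F] [LieRing L] [LieAlgebra F L]
    (p : ℕ) [CharP F p] (hp : 0 < p) [FiniteDimensional F L]
    (Lgr : ℤ → Submodule F L)
    (hdirect : DirectSum.IsInternal Lgr)
    (hbracket : ∀ i j : ℤ, ∀ x ∈ Lgr i, ∀ y ∈ Lgr j, ⁅x, y⁆ ∈ Lgr (i + j))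
    (htrans : ∀ i : ℤ, 0 ≤ i → ∀ x ∈ Lgr i, (∀ y ∈ Lgr (-1), ⁅x, y⁆ = 0) → x = 0)
    (hne : Lgr (-1) ≠ ⊥)
    (hirr : ∀ W : Submodule F L, W ≤ Lgr (-1) →
      (∀ z ∈ Lgr 0, ∀ w ∈ W, ⁅z, w⁆ ∈ W) → W = ⊥ ∨ W = Lgr (-1))
    (hgen : ∀ i : ℤ, 1 < i →
      Lgr (-i) = Submodule.span F {m | ∃ x ∈ Lgr (-1), ∃ y ∈ Lgr (-i + 1), m = ⁅x, y⁆})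
    (hrad : ∀ J : LieIdeal F L, (J : Submodule F L) ≤ ⨆ i < (0 : ℤ), Lgr i → J = ⊥) :
    ∃ I : LieIdeal F L, I ≠ ⊥ ∧ (∀ J : LieIdeal F L, J ≠ ⊥ → I ≤ J) ∧
      ((I : Submodule F L) = ⨆ i : ℤ, (I : Submodule F L) ⊓ Lgr i) ∧
      (∀ i : ℤ, i < 0 → (I : Submodule F L) ⊓ Lgr i = Lgr i) :=
  stmt_2_general Lgr hdirect hbracket htrans hne hirr hgen hrad
end

section
/- Let F be an algebraically closed field of characteristic p > 0 and let L be a finite-dimensional transitive irreducible ℤ-graded Lie algebra over F such that the only ideal of L contained in ⊕_{i<0} L_i is zero. Let I be a nonzero ideal of L contained in every nonzero ideal of L (the unique minimal ideal), and suppose I ∩ L_1 = 0 (the degenerate case). Then L_2 = 0, [[L_{-1}, L_1], L_1] = 0, and [L_{-1}, L_1] = I ∩ L_0. -/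
/-!
The torus `Fˣ` acts on `L` by Lie automorphisms, `t` acting on `Lᵢ` as `tⁱ`. A minimal ideal is
carried into itself by every automorphism, and an `Fˣ`-stable subspace of `L` is graded because the
infinite field `F` has elements whose powers separate any finitely many degrees. So `I` is graded.
If `I ∩ L₋₁` were `0`, transitivity would give `I ∩ Lᵢ = 0` for all `i ≥ 0`, i.e. `I ⊆ L_{<0}`;
hence `L₋₁ ⊆ I` by irreducibility. Transitivity against `L₋₁ ⊆ I` and `I ∩ L₁ = 0` then kills
`Lᵢ` for `i ≥ 2` and `[[L₋₁, L₁], L₁]`. Finally `[L₋₁, L₁] + L_{<0}` is a nonzero ideal, so it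
contains `I`, and its degree `0` part is `[L₋₁, L₁]`.
-/

open DirectSum

theorem Units.exists_zpow_ne_zpow {F : Type*} [Field F] [Infinite F] (s : Finset ℤ) {j : ℤ}
    (hj : j ∉ s) : ∃ t : Fˣ, ∀ k ∈ s, t ^ k ≠ t ^ j := by
  classical
  obtain ⟨a, ha⟩ := Infinite.exists_notMem_finset
    (insert 0 (s.biUnion fun k => (Polynomial.nthRoots (k - j).natAbs (1 : F)).toFinset))
  simp only [Finset.mem_insert, Finset.mem_biUnion, Multiset.mem_toFinset, not_or,
    not_exists, not_and] at ha
  refine ⟨Units.mk0 a ha.1, fun k hk hkj => ha.2 k hk ?_⟩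
  have hpos : 0 < (k - j).natAbs :=
    Int.natAbs_pos.mpr (sub_ne_zero.mpr (ne_of_mem_of_not_mem hk hj))
  rw [Polynomial.mem_nthRoots hpos, ← Units.val_mk0 ha.1, ← Units.val_pow_eq_pow_val,
    Units.val_eq_one, pow_natAbs_eq_one, zpow_sub, hkj, mul_inv_cancel]

namespace DirectSum

variable {F M : Type*} [Field F] [AddCommGroup M] [Module F M]
  (ℳ : ℤ → Submodule F M) [Decomposition ℳ]

noncomputable def gradeScaling (t : Fˣ) : M →ₗ[F] M :=
  toModule F ℤ M (fun i => ((t ^ i : Fˣ) : F) • (ℳ i).subtype) ∘ₗ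
    (decomposeLinearEquiv ℳ).toLinearMap

variable {ℳ}

theorem gradeScaling_of_mem (t : Fˣ) {i : ℤ} {x : M} (hx : x ∈ ℳ i) :
    gradeScaling ℳ t x = ((t ^ i : Fˣ) : F) • x := by
  simp [gradeScaling, decomposeLinearEquiv_apply, decompose_of_mem ℳ hx, ← lof_eq_of F]

theorem decompose_gradeScaling (t : Fˣ) (x : M) (i : ℤ) :
    (decompose ℳ (gradeScaling ℳ t x) i : M) = ((t ^ i : Fˣ) : F) • (decompose ℳ x i : M) := by
  induction x using Decomposition.inductionOn ℳ with
  | zero => simp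
  | @homogeneous j m =>
    obtain ⟨m, hm⟩ := m
    rw [gradeScaling_of_mem t hm, decompose_smul, smul_apply, Submodule.coe_smul]
    by_cases hij : j = i
    · subst hij; rw [decompose_of_mem_same ℳ hm]
    · rw [decompose_of_mem_ne ℳ hm hij, smul_zero, smul_zero]
  | add a b ha hb => simp [ha, hb]

variable (ℳ) in
theorem gradeScaling_gradeScaling_inv (t : Fˣ) (x : M) :
    gradeScaling ℳ t (gradeScaling ℳ t⁻¹ x) = x := by
  induction x using Decomposition.inductionOn ℳ with
  | zero => simp
  | homogeneous m =>
    rw [gradeScaling_of_mem _ m.2, map_smul, gradeScaling_of_mem _ m.2, smul_smul,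
      ← Units.val_mul, ← mul_zpow, inv_mul_cancel, one_zpow, Units.val_one, one_smul]
  | add a b ha hb => simp [ha, hb]

theorem decompose_mem_of_forall_ne {p : Submodule F M} {x : M} (hx : x ∈ p) {j : ℤ}
    (h : ∀ k ≠ j, (decompose ℳ x k : M) ∈ p) : (decompose ℳ x j : M) ∈ p := by
  classical
  have hsum := sum_support_decompose ℳ x
  by_cases hj : j ∈ (decompose ℳ x).support
  · rw [← Finset.add_sum_erase _ _ hj] at hsum
    rw [eq_sub_of_add_eq hsum]
    exact sub_mem hx (sum_mem fun k hk => h k (Finset.ne_of_mem_erase hk))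
  · simp [DFinsupp.notMem_support_iff.mp hj]

theorem isHomogeneous_of_gradeScaling_mem [Infinite F] {p : Submodule F M}
    (hp : ∀ (t : Fˣ), ∀ x ∈ p, gradeScaling ℳ t x ∈ p) : SetLike.IsHomogeneous ℳ p := by
  classical
  suffices h : ∀ s : Finset ℤ, ∀ x ∈ p, (∀ i ∉ s, decompose ℳ x i = 0) →
      ∀ i, (decompose ℳ x i : M) ∈ p from
    fun i x hx => h (decompose ℳ x).support x hx (fun i hi => by simpa using hi) i
  intro s
  induction s using Finset.induction_on with
  | empty =>
    intro x _ hx i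
    simp [hx i (Finset.notMem_empty i)]
  | insert j s hj ih =>
    intro x hx hsupp
    obtain ⟨t, ht⟩ := Units.exists_zpow_ne_zpow (F := F) s hj
    -- `y` has no degree `j` part, and degree `k` part `(tᵏ - tʲ) xₖ` with `tᵏ ≠ tʲ`.
    set y := gradeScaling ℳ t x - ((t ^ j : Fˣ) : F) • x
    have hy (k : ℤ) : (decompose ℳ y k : M) =
        (((t ^ k : Fˣ) : F) - ((t ^ j : Fˣ) : F)) • (decompose ℳ x k : M) := by
      simp [y, decompose_gradeScaling, smul_apply, sub_smul]
    have hyp : ∀ i, (decompose ℳ y i : M) ∈ p := by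
      refine ih y (sub_mem (hp t x hx) (p.smul_mem _ hx)) fun i hi => ?_
      by_cases hij : i = j
      · subst hij; ext; simp [hy]
      · ext; simp [hy, hsupp i (by simp [hij, hi])]
    have hcomp : ∀ k ≠ j, (decompose ℳ x k : M) ∈ p := by
      intro k hkj
      by_cases hk : k ∈ s
      · have hne : ((t ^ k : Fˣ) : F) - ((t ^ j : Fˣ) : F) ≠ 0 :=
          sub_ne_zero.mpr (Units.val_injective.ne (ht k hk))
        have := p.smul_mem (((t ^ k : Fˣ) : F) - ((t ^ j : Fˣ) : F))⁻¹ (hy k ▸ hyp k)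
        rwa [smul_smul, inv_mul_cancel₀ hne, one_smul] at this
      · simp [hsupp k (by simp [hkj, hk])]
    intro i
    by_cases hij : i = j
    · exact hij ▸ decompose_mem_of_forall_ne hx hcomp
    · exact hcomp i hij

end DirectSum

theorem SetLike.IsHomogeneous.le_iSup_of_inf_eq_bot {ι R M : Type*} [DecidableEq ι] [Semiring R]
    [AddCommMonoid M] [Module R M] {ℳ : ι → Submodule R M} [Decomposition ℳ]
    {p : Submodule R M} (hp : SetLike.IsHomogeneous ℳ p) {P : ι → Prop}
    (h : ∀ i, ¬ P i → p ⊓ ℳ i = ⊥) : p ≤ ⨆ (i) (_ : P i), ℳ i := by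
  classical
  intro x hx
  rw [← sum_support_decompose ℳ x]
  refine sum_mem fun i _ => ?_
  by_cases hi : P i
  · exact le_iSup₂ (f := fun i (_ : P i) => ℳ i) i hi (decompose ℳ x i).2
  · have : (decompose ℳ x i : M) ∈ p ⊓ ℳ i := ⟨hp i hx, (decompose ℳ x i).2⟩
    rw [(Submodule.eq_bot_iff _).mp (h i hi) _ this]
    exact zero_mem _

section GradedLie

variable {F L : Type*} [Field F] [LieRing L] [LieAlgebra F L] {Lgr : ℤ → Submodule F L}

theorem DirectSum.gradeScaling_lie [GradedLieAlgebra Lgr] (t : Fˣ) (x y : L) :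
    gradeScaling Lgr t ⁅x, y⁆ = ⁅gradeScaling Lgr t x, gradeScaling Lgr t y⁆ := by
  induction x using Decomposition.inductionOn Lgr with
  | zero => simp
  | add a b ha hb => simp [add_lie, ha, hb]
  | homogeneous a =>
    induction y using Decomposition.inductionOn Lgr with
    | zero => simp
    | add c d hc hd => simp [lie_add, hc, hd]
    | homogeneous b =>
      rw [gradeScaling_of_mem t a.2, gradeScaling_of_mem t b.2,
        gradeScaling_of_mem t (SetLike.GradedBracket.bracket_mem a.2 b.2), smul_lie, lie_smul,
        smul_smul, ← Units.val_mul, ← zpow_add]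

variable (Lgr) in
noncomputable def DirectSum.gradeScalingLieHom [GradedLieAlgebra Lgr] (t : Fˣ) : L →ₗ⁅F⁆ L :=
  { gradeScaling Lgr t with map_lie' := gradeScaling_lie t _ _ }

theorem LieIdeal.isHomogeneous_of_forall_ne_bot_le [Infinite F] [GradedLieAlgebra Lgr]
    {I : LieIdeal F L} (hI : I ≠ ⊥) (hImin : ∀ J : LieIdeal F L, J ≠ ⊥ → I ≤ J) :
    SetLike.IsHomogeneous Lgr (I : Submodule F L) := by
  refine isHomogeneous_of_gradeScaling_mem fun t x hx => ?_
  obtain ⟨z, hzI, hz⟩ := Submodule.exists_mem_ne_zero_of_ne_bot (p := (I : Submodule F L))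
    (by simpa using hI)
  have hK : LieIdeal.comap (gradeScalingLieHom Lgr t) I ≠ ⊥ := by
    intro hK
    have : gradeScaling Lgr t⁻¹ z ∈ LieIdeal.comap (gradeScalingLieHom Lgr t) I := by
      rw [LieIdeal.mem_comap]
      exact (gradeScaling_gradeScaling_inv Lgr t z).symm ▸ hzI
    rw [hK, LieSubmodule.mem_bot] at this
    exact hz (by rw [← gradeScaling_gradeScaling_inv Lgr t z, this, map_zero])
  exact LieIdeal.mem_comap.mp (hImin _ hK hx)

theorem SetLike.GradedBracket.bracket_mem_sub_one [SetLike.GradedBracket Lgr] {i : ℤ} {x y : L}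
    (hx : x ∈ Lgr i) (hy : y ∈ Lgr (-1)) : ⁅x, y⁆ ∈ Lgr (i - 1) := by
  simpa [sub_eq_add_neg] using bracket_mem hx hy

theorem SetLike.GradedBracket.bracket_mem_zero [SetLike.GradedBracket Lgr] {x y : L}
    (hx : x ∈ Lgr (-1)) (hy : y ∈ Lgr 1) : ⁅x, y⁆ ∈ Lgr 0 := by
  simpa using bracket_mem hx hy

theorem LieIdeal.inf_grade_eq_bot_of_sub_one [SetLike.GradedBracket Lgr]
    (htrans : ∀ i : ℤ, 0 ≤ i → ∀ x ∈ Lgr i, (∀ y ∈ Lgr (-1), ⁅x, y⁆ = 0) → x = 0)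
    (J : LieIdeal F L) {i : ℤ} (hi : 0 ≤ i)
    (h : (J : Submodule F L) ⊓ Lgr (i - 1) = ⊥) : (J : Submodule F L) ⊓ Lgr i = ⊥ := by
  rw [Submodule.eq_bot_iff]
  rintro x ⟨hxJ, hx⟩
  refine htrans i hi x hx fun y hy => ?_
  have : ⁅x, y⁆ ∈ (J : Submodule F L) ⊓ Lgr (i - 1) :=
    ⟨lie_mem_left F L J x y hxJ, SetLike.GradedBracket.bracket_mem_sub_one hx hy⟩
  exact (Submodule.eq_bot_iff _).mp h _ this

theorem LieIdeal.inf_grade_eq_bot_of_le [SetLike.GradedBracket Lgr]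
    (htrans : ∀ i : ℤ, 0 ≤ i → ∀ x ∈ Lgr i, (∀ y ∈ Lgr (-1), ⁅x, y⁆ = 0) → x = 0)
    (J : LieIdeal F L) {i₀ i : ℤ} (hi₀ : -1 ≤ i₀)
    (h : (J : Submodule F L) ⊓ Lgr i₀ = ⊥) (hi : i₀ ≤ i) : (J : Submodule F L) ⊓ Lgr i = ⊥ := by
  induction i, hi using Int.leInduction with
  | base => exact h
  | succ i hi ih => exact J.inf_grade_eq_bot_of_sub_one htrans (by omega) (by simpa using ih)

theorem grade_eq_bot_of_inf_grade_sub_one [SetLike.GradedBracket Lgr]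
    (htrans : ∀ i : ℤ, 0 ≤ i → ∀ x ∈ Lgr i, (∀ y ∈ Lgr (-1), ⁅x, y⁆ = 0) → x = 0)
    {J : LieIdeal F L} {i : ℤ} (hi : 0 ≤ i)
    (hneg : Lgr (-1) ≤ J) (h : (J : Submodule F L) ⊓ Lgr (i - 1) = ⊥) : Lgr i = ⊥ := by
  rw [Submodule.eq_bot_iff]
  refine fun x hx => htrans i hi x hx fun y hy => ?_
  have : ⁅x, y⁆ ∈ (J : Submodule F L) ⊓ Lgr (i - 1) :=
    ⟨lie_mem_right F L J x y (hneg hy), SetLike.GradedBracket.bracket_mem_sub_one hx hy⟩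
  exact (Submodule.eq_bot_iff _).mp h _ this

theorem LieIdeal.grade_neg_one_le_of_isHomogeneous [GradedLieAlgebra Lgr]
    (htrans : ∀ i : ℤ, 0 ≤ i → ∀ x ∈ Lgr i, (∀ y ∈ Lgr (-1), ⁅x, y⁆ = 0) → x = 0)
    (hirr : ∀ W : Submodule F L, W ≤ Lgr (-1) →
      (∀ z ∈ Lgr 0, ∀ w ∈ W, ⁅z, w⁆ ∈ W) → W = ⊥ ∨ W = Lgr (-1))
    (hrad : ∀ J : LieIdeal F L, (J : Submodule F L) ≤ ⨆ i < (0 : ℤ), Lgr i → J = ⊥)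
    {I : LieIdeal F L} (hI : I ≠ ⊥) (hhom : SetLike.IsHomogeneous Lgr (I : Submodule F L)) :
    Lgr (-1) ≤ I := by
  have hstable : ∀ z ∈ Lgr 0, ∀ w ∈ (I : Submodule F L) ⊓ Lgr (-1),
      ⁅z, w⁆ ∈ (I : Submodule F L) ⊓ Lgr (-1) := fun z hz w hw =>
    ⟨lie_mem_right F L I z w hw.1, by simpa using SetLike.GradedBracket.bracket_mem hz hw.2⟩
  rcases hirr _ inf_le_right hstable with hW | hW
  · refine absurd (hrad I (SetLike.IsHomogeneous.le_iSup_of_inf_eq_bot hhom fun i hi => ?_)) hI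
    exact I.inf_grade_eq_bot_of_le htrans le_rfl hW (by omega)
  · exact hW.ge.trans inf_le_left

theorem lie_lie_eq_zero_of_inf_eq_bot [SetLike.GradedBracket Lgr] {I : LieIdeal F L}
    (hneg : Lgr (-1) ≤ I) (hdeg : (I : Submodule F L) ⊓ Lgr 1 = ⊥) :
    ∀ x ∈ Lgr (-1), ∀ y ∈ Lgr 1, ∀ z ∈ Lgr 1, ⁅⁅x, y⁆, z⁆ = 0 := by
  intro x hx y hy z hz
  have : ⁅⁅x, y⁆, z⁆ ∈ (I : Submodule F L) ⊓ Lgr 1 :=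
    ⟨lie_mem_left F L I _ z (lie_mem_left F L I x y (hneg hx)), by
      simpa using
        SetLike.GradedBracket.bracket_mem (SetLike.GradedBracket.bracket_mem_zero hx hy) hz⟩
  exact (Submodule.eq_bot_iff _).mp hdeg _ this

theorem span_lie_le_grade_zero [SetLike.GradedBracket Lgr] :
    Submodule.span F {m | ∃ x ∈ Lgr (-1), ∃ y ∈ Lgr 1, m = ⁅x, y⁆} ≤ Lgr 0 :=
  Submodule.span_le.mpr fun _ ⟨_, hx, _, hy, hm⟩ =>
    hm ▸ SetLike.GradedBracket.bracket_mem_zero hx hy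

theorem lie_mem_of_forall_grade [Decomposition Lgr] {N : Submodule F L}
    (h : ∀ i, ∀ x ∈ Lgr i, ∀ m ∈ N, ⁅x, m⁆ ∈ N) (x : L) {m : L} (hm : m ∈ N) : ⁅x, m⁆ ∈ N := by
  induction x using Decomposition.inductionOn Lgr with
  | zero => simp
  | homogeneous x => exact h _ x x.2 m hm
  | add a b ha hb => simpa [add_lie] using add_mem ha hb

theorem lie_mem_span_lie_sup_neg [GradedLieAlgebra Lgr] (hpos : ∀ i, 2 ≤ i → Lgr i = ⊥)
    (hcomm : ∀ x ∈ Lgr (-1), ∀ y ∈ Lgr 1, ∀ z ∈ Lgr 1, ⁅⁅x, y⁆, z⁆ = 0) (x : L) {m : L}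
    (hm : m ∈ Submodule.span F {m | ∃ x ∈ Lgr (-1), ∃ y ∈ Lgr 1, m = ⁅x, y⁆} ⊔
      ⨆ i < (0 : ℤ), Lgr i) :
    ⁅x, m⁆ ∈ Submodule.span F {m | ∃ x ∈ Lgr (-1), ∃ y ∈ Lgr 1, m = ⁅x, y⁆} ⊔
      ⨆ i < (0 : ℤ), Lgr i := by
  set T := Submodule.span F {m | ∃ x ∈ Lgr (-1), ∃ y ∈ Lgr 1, m = ⁅x, y⁆}
  have hneg {j : ℤ} (hj : j < 0) : Lgr j ≤ T ⊔ ⨆ i < (0 : ℤ), Lgr i :=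
    (le_iSup₂ (f := fun i (_ : i < 0) => Lgr i) j hj).trans le_sup_right
  refine lie_mem_of_forall_grade (Lgr := Lgr) (fun i x hx => ?_) x hm
  rcases le_or_gt 2 i with hi | hi
  · intro m _
    simp [(Submodule.eq_bot_iff _).mp (hpos i hi) x hx]
  suffices T ⊔ ⨆ i < (0 : ℤ), Lgr i ≤
      (T ⊔ ⨆ i < (0 : ℤ), Lgr i).comap (LieModule.toEnd F L L x) from fun m hm => this hm
  refine sup_le (Submodule.span_le.mpr ?_) (iSup₂_le fun j hj m hm => ?_)
  · rintro _ ⟨a, ha, b, hb, rfl⟩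
    simp only [SetLike.mem_coe, Submodule.mem_comap, LieModule.toEnd_apply_apply]
    rcases lt_trichotomy i 0 with hi0 | rfl | hi0
    · exact hneg hi0 (by simpa using
        SetLike.GradedBracket.bracket_mem hx (SetLike.GradedBracket.bracket_mem_zero ha hb))
    · rw [leibniz_lie]
      refine Submodule.mem_sup_left (add_mem (Submodule.subset_span ⟨⁅x, a⁆, ?_, b, hb, rfl⟩)
        (Submodule.subset_span ⟨a, ha, ⁅x, b⁆, ?_, rfl⟩)) <;>
        simpa using SetLike.GradedBracket.bracket_mem hx ‹_›
    · obtain rfl : i = 1 := by omega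
      rw [← lie_skew, hcomm a ha b hb x hx, neg_zero]
      exact zero_mem _
  · simp only [Submodule.mem_comap, LieModule.toEnd_apply_apply]
    rcases lt_or_ge (i + j) 0 with hij | hij
    · exact hneg hij (SetLike.GradedBracket.bracket_mem hx hm)
    · obtain rfl : i = 1 := by omega
      obtain rfl : j = -1 := by omega
      rw [← lie_skew]
      exact Submodule.mem_sup_left (neg_mem (Submodule.subset_span ⟨m, hm, x, hx, rfl⟩))

theorem inf_grade_zero_le_span_lie [GradedLieAlgebra Lgr] (hne : Lgr (-1) ≠ ⊥) {I : LieIdeal F L}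
    (hImin : ∀ J : LieIdeal F L, J ≠ ⊥ → I ≤ J) (hpos : ∀ i, 2 ≤ i → Lgr i = ⊥)
    (hcomm : ∀ x ∈ Lgr (-1), ∀ y ∈ Lgr 1, ∀ z ∈ Lgr 1, ⁅⁅x, y⁆, z⁆ = 0) :
    (I : Submodule F L) ⊓ Lgr 0 ≤
      Submodule.span F {m | ∃ x ∈ Lgr (-1), ∃ y ∈ Lgr 1, m = ⁅x, y⁆} := by
  set T := Submodule.span F {m | ∃ x ∈ Lgr (-1), ∃ y ∈ Lgr 1, m = ⁅x, y⁆}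
  let K : LieIdeal F L :=
    { toSubmodule := T ⊔ ⨆ i < (0 : ℤ), Lgr i
      lie_mem := fun hm => lie_mem_span_lie_sup_neg hpos hcomm _ hm }
  have hK : K ≠ ⊥ := by
    refine fun hK => hne (eq_bot_iff.mpr ?_)
    have : Lgr (-1) ≤ (K : Submodule F L) :=
      (le_iSup₂ (f := fun i (_ : i < 0) => Lgr i) (-1) (by norm_num)).trans le_sup_right
    simpa [hK] using this
  have hdisj : (⨆ i < (0 : ℤ), Lgr i) ⊓ Lgr 0 = ⊥ :=
    ((Decomposition.isInternal Lgr).submodule_iSupIndep.disjoint_biSup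
      (y := {i | i < 0}) (lt_irrefl (0 : ℤ))).symm.eq_bot
  calc (I : Submodule F L) ⊓ Lgr 0 ≤ (K : Submodule F L) ⊓ Lgr 0 :=
        inf_le_inf_right _ (hImin K hK)
    _ = T ⊔ (⨆ i < (0 : ℤ), Lgr i) ⊓ Lgr 0 := sup_inf_assoc_of_le _ span_lie_le_grade_zero
    _ = T := by rw [hdisj, sup_bot_eq]

end GradedLie

theorem stmt_4_general {F L : Type*} [Field F] [IsAlgClosed F] [LieRing L] [LieAlgebra F L]
    (Lgr : ℤ → Submodule F L)
    (hdirect : DirectSum.IsInternal Lgr)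
    (hbracket : ∀ i j : ℤ, ∀ x ∈ Lgr i, ∀ y ∈ Lgr j, ⁅x, y⁆ ∈ Lgr (i + j))
    (htrans : ∀ i : ℤ, 0 ≤ i → ∀ x ∈ Lgr i, (∀ y ∈ Lgr (-1), ⁅x, y⁆ = 0) → x = 0)
    (hne : Lgr (-1) ≠ ⊥)
    (hirr : ∀ W : Submodule F L, W ≤ Lgr (-1) →
      (∀ z ∈ Lgr 0, ∀ w ∈ W, ⁅z, w⁆ ∈ W) → W = ⊥ ∨ W = Lgr (-1))
    (hrad : ∀ J : LieIdeal F L, (J : Submodule F L) ≤ ⨆ i < (0 : ℤ), Lgr i → J = ⊥)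
    (I : LieIdeal F L) (hI : I ≠ ⊥) (hImin : ∀ J : LieIdeal F L, J ≠ ⊥ → I ≤ J)
    (hdeg : (I : Submodule F L) ⊓ Lgr 1 = ⊥) :
    Lgr 2 = ⊥ ∧
      (∀ x ∈ Lgr (-1), ∀ y ∈ Lgr 1, ∀ z ∈ Lgr 1, ⁅⁅x, y⁆, z⁆ = 0) ∧
      Submodule.span F {m | ∃ x ∈ Lgr (-1), ∃ y ∈ Lgr 1, m = ⁅x, y⁆} =
        (I : Submodule F L) ⊓ Lgr 0 := by
  let _ : GradedLieAlgebra Lgr :=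
    { toDecomposition := hdirect.chooseDecomposition
      bracket_mem := fun {i j} {x y} hx hy => hbracket i j x hx y hy }
  have hneg : Lgr (-1) ≤ I := I.grade_neg_one_le_of_isHomogeneous htrans hirr hrad hI
    (I.isHomogeneous_of_forall_ne_bot_le hI hImin)
  have hpos (i : ℤ) (hi : 2 ≤ i) : Lgr i = ⊥ :=
    grade_eq_bot_of_inf_grade_sub_one htrans (by omega) hneg
      (I.inf_grade_eq_bot_of_le htrans (by norm_num) hdeg (by omega))
  have hcomm := lie_lie_eq_zero_of_inf_eq_bot hneg hdeg
  refine ⟨hpos 2 le_rfl, hcomm, le_antisymm ?_ (inf_grade_zero_le_span_lie hne hImin hpos hcomm)⟩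
  exact le_inf (Submodule.span_le.mpr fun _ ⟨x, hx, y, hy, hm⟩ =>
    hm ▸ lie_mem_left F L I x y (hneg hx)) span_lie_le_grade_zero

/-- (Degenerate case of Weisfeiler's theorem.)  Let `L` be a finite-dimensional
transitive irreducible `ℤ`-graded Lie algebra over an algebraically closed field `F` of
characteristic `p > 0`, with no nonzero ideal contained in `⊕_{i<0} Lᵢ`, and let `I` be the unique
minimal ideal of `L`.  If `I ∩ L₁ = 0`, then `L₂ = 0`, `[[L₋₁, L₁], L₁] = 0`, and
`[L₋₁, L₁] = I ∩ L₀`. -/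
theorem stmt_4 {F L : Type*} [Field F] [IsAlgClosed F] [LieRing L] [LieAlgebra F L]
    (p : ℕ) [CharP F p] (hp : 0 < p) [FiniteDimensional F L]
    (Lgr : ℤ → Submodule F L)
    (hdirect : DirectSum.IsInternal Lgr)
    (hbracket : ∀ i j : ℤ, ∀ x ∈ Lgr i, ∀ y ∈ Lgr j, ⁅x, y⁆ ∈ Lgr (i + j))
    (htrans : ∀ i : ℤ, 0 ≤ i → ∀ x ∈ Lgr i, (∀ y ∈ Lgr (-1), ⁅x, y⁆ = 0) → x = 0)
    (hne : Lgr (-1) ≠ ⊥)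
    (hirr : ∀ W : Submodule F L, W ≤ Lgr (-1) →
      (∀ z ∈ Lgr 0, ∀ w ∈ W, ⁅z, w⁆ ∈ W) → W = ⊥ ∨ W = Lgr (-1))
    (hgen : ∀ i : ℤ, 1 < i →
      Lgr (-i) = Submodule.span F {m | ∃ x ∈ Lgr (-1), ∃ y ∈ Lgr (-i + 1), m = ⁅x, y⁆})
    (hrad : ∀ J : LieIdeal F L, (J : Submodule F L) ≤ ⨆ i < (0 : ℤ), Lgr i → J = ⊥)
    (I : LieIdeal F L) (hI : I ≠ ⊥) (hImin : ∀ J : LieIdeal F L, J ≠ ⊥ → I ≤ J)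
    (hdeg : (I : Submodule F L) ⊓ Lgr 1 = ⊥) :
    Lgr 2 = ⊥ ∧
      (∀ x ∈ Lgr (-1), ∀ y ∈ Lgr 1, ∀ z ∈ Lgr 1, ⁅⁅x, y⁆, z⁆ = 0) ∧
      Submodule.span F {m | ∃ x ∈ Lgr (-1), ∃ y ∈ Lgr 1, m = ⁅x, y⁆} =
        (I : Submodule F L) ⊓ Lgr 0 :=
  stmt_4_general Lgr hdirect hbracket htrans hne hirr hrad I hI hImin hdeg
end

section
/- Let F be an algebraically closed field of characteristic p > 0 and let L be a finite-dimensional transitive irreducible ℤ-graded Lie algebra over F such that the only ideal of L contained in ⊕_{i<0} L_i is zero. Let I be a nonzero ideal of L contained in every nonzero ideal of L (the unique minimal ideal), and suppose I ∩ L_1 ≠ 0 (the non-degenerate case). Then [L_{-1}, L_1] ≠ 0 and [L_{-1}, L_1] ⊆ I ∩ L_0. -/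
/-- (Non-degenerate case of Weisfeiler's theorem.)  Let `L` be a
finite-dimensional transitive irreducible `ℤ`-graded Lie algebra over an algebraically closed
field `F` of characteristic `p > 0`, with no nonzero ideal contained in `⊕_{i<0} Lᵢ`, and let `I`
be the unique minimal ideal of `L`.  If `I ∩ L₁ ≠ 0`, then `[L₋₁, L₁] ≠ 0` and
`[L₋₁, L₁] ⊆ I ∩ L₀`. -/
theorem stmt_5 {F L : Type*} [Field F] [IsAlgClosed F] [LieRing L] [LieAlgebra F L]
    (p : ℕ) [CharP F p] (hp : 0 < p) [FiniteDimensional F L]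
    (Lgr : ℤ → Submodule F L)
    (hdirect : DirectSum.IsInternal Lgr)
    (hbracket : ∀ i j : ℤ, ∀ x ∈ Lgr i, ∀ y ∈ Lgr j, ⁅x, y⁆ ∈ Lgr (i + j))
    (htrans : ∀ i : ℤ, 0 ≤ i → ∀ x ∈ Lgr i, (∀ y ∈ Lgr (-1), ⁅x, y⁆ = 0) → x = 0)
    (hne : Lgr (-1) ≠ ⊥)
    (hirr : ∀ W : Submodule F L, W ≤ Lgr (-1) →
      (∀ z ∈ Lgr 0, ∀ w ∈ W, ⁅z, w⁆ ∈ W) → W = ⊥ ∨ W = Lgr (-1))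
    (hgen : ∀ i : ℤ, 1 < i →
      Lgr (-i) = Submodule.span F {m | ∃ x ∈ Lgr (-1), ∃ y ∈ Lgr (-i + 1), m = ⁅x, y⁆})
    (hrad : ∀ J : LieIdeal F L, (J : Submodule F L) ≤ ⨆ i < (0 : ℤ), Lgr i → J = ⊥)
    (I : LieIdeal F L) (hI : I ≠ ⊥) (hImin : ∀ J : LieIdeal F L, J ≠ ⊥ → I ≤ J)
    (hnondeg : (I : Submodule F L) ⊓ Lgr 1 ≠ ⊥) :
    Submodule.span F {m | ∃ x ∈ Lgr (-1), ∃ y ∈ Lgr 1, m = ⁅x, y⁆} ≠ ⊥ ∧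
      Submodule.span F {m | ∃ x ∈ Lgr (-1), ∃ y ∈ Lgr 1, m = ⁅x, y⁆} ≤
        (I : Submodule F L) ⊓ Lgr 0 := by
  obtain ⟨y, hy, hy0⟩ := (Submodule.ne_bot_iff _).mp hnondeg
  have hyI : y ∈ I := hy.1
  have hy1 : y ∈ Lgr 1 := hy.2
  constructor
  · intro hbot
    apply hy0
    apply htrans 1 (by norm_num) y hy1
    intro w hw
    have h : ⁅w, y⁆ ∈ Submodule.span F {m | ∃ x ∈ Lgr (-1), ∃ y ∈ Lgr 1, m = ⁅x, y⁆} :=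
      Submodule.subset_span ⟨w, hw, y, hy1, rfl⟩
    rw [hbot, Submodule.mem_bot] at h
    rw [← lie_skew, h, neg_zero]
  · set W := Lgr (-1) ⊓ (I : Submodule F L) with hW
    have hWle : W ≤ Lgr (-1) := inf_le_left
    have hWinv : ∀ z ∈ Lgr 0, ∀ w ∈ W, ⁅z, w⁆ ∈ W := by
      intro z hz w hw
      exact ⟨by simpa using hbracket 0 (-1) z hz w hw.1, I.lie_mem hw.2⟩
    rcases hirr W hWle hWinv with hbotW | htop
    · exfalso
      apply hy0
      apply htrans 1 (by norm_num) y hy1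
      intro w hw
      have hz0 : ⁅y, w⁆ ∈ Lgr 0 := by simpa using hbracket 1 (-1) y hy1 w hw
      have hzI : ⁅y, w⁆ ∈ I := by
        rw [← lie_skew]
        exact neg_mem (I.lie_mem hyI)
      apply htrans 0 le_rfl _ hz0
      intro v hv
      have hmem : ⁅⁅y, w⁆, v⁆ ∈ W :=
        ⟨by simpa using hbracket 0 (-1) _ hz0 v hv, by rw [← lie_skew]; exact neg_mem (I.lie_mem hzI)⟩
      rw [hbotW, Submodule.mem_bot] at hmem
      exact hmem
    · rw [Submodule.span_le]
      rintro m ⟨x, hx, z, hz, rfl⟩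
      have hxW : x ∈ W := htop ▸ hx
      have hxI : x ∈ I := hxW.2
      refine ⟨?_, by simpa using hbracket (-1) 1 x hx z hz⟩
      show ⁅x, z⁆ ∈ I
      rw [← lie_skew]
      exact neg_mem (I.lie_mem hxI)
end

section
/- Let F be a field and let L be a transitive ℤ-graded Lie algebra over F. If V ⊆ L_1 is an F-subspace such that [[L_{-1}, V], V] = 0, then [V, V] = 0. -/
/-- Let `F` be a field and let `L` be a transitive `ℤ`-graded Lie algebra over
`F`.  If `V ⊆ L₁` is an `F`-subspace such that `[[L₋₁, V], V] = 0`, then `[V, V] = 0`. -/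
theorem stmt_6 {F L : Type*} [Field F] [LieRing L] [LieAlgebra F L]
    (Lgr : ℤ → Submodule F L)
    (hdirect : DirectSum.IsInternal Lgr)
    (hbracket : ∀ i j : ℤ, ∀ x ∈ Lgr i, ∀ y ∈ Lgr j, ⁅x, y⁆ ∈ Lgr (i + j))
    (htrans : ∀ i : ℤ, 0 ≤ i → ∀ x ∈ Lgr i, (∀ y ∈ Lgr (-1), ⁅x, y⁆ = 0) → x = 0)
    (V : Submodule F L) (hV1 : V ≤ Lgr 1)
    (hVV : ∀ x ∈ Lgr (-1), ∀ v ∈ V, ∀ w ∈ V, ⁅⁅x, v⁆, w⁆ = 0) :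
    ∀ v ∈ V, ∀ w ∈ V, ⁅v, w⁆ = 0 := by
  intro v hv w hw
  apply htrans 2 (by norm_num) _ (by simpa using hbracket 1 1 v (hV1 hv) w (hV1 hw))
  intro x hx
  have h1 : ⁅v, ⁅w, x⁆⁆ = 0 := by
    have h := hVV x hx w hw v hv
    rw [← lie_skew, ← lie_skew w x] at *
    simpa using h
  have h2 : ⁅w, ⁅v, x⁆⁆ = 0 := by
    have h := hVV x hx v hv w hw
    rw [← lie_skew, ← lie_skew v x] at *
    simpa using h
  rw [lie_lie, h1, h2, sub_zero]
end

section
/- Let F be a field, let S be a finite-dimensional simple Lie algebra over F, and let M be a finite-dimensional Lie module over S such that s • (s • m) = 0 for every s ∈ S and m ∈ M. Then S acts trivially on M: s • m = 0 for all s ∈ S, m ∈ M. -/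
/-- Let `F` be a field, let `S` be a finite-dimensional simple Lie algebra over
`F`, and let `M` be a finite-dimensional Lie module over `S` such that `s • (s • m) = 0` for every
`s ∈ S` and `m ∈ M`.  Then `S` acts trivially on `M`. -/
theorem stmt_7 {F S M : Type*} [Field F] [LieRing S] [LieAlgebra F S]
    [FiniteDimensional F S] [LieAlgebra.IsSimple F S]
    [AddCommGroup M] [Module F M] [FiniteDimensional F M]
    [LieRingModule S M] [LieModule F S M]
    (h : ∀ (s : S) (m : M), ⁅s, ⁅s, m⁆⁆ = 0) :
    ∀ (s : S) (m : M), ⁅s, m⁆ = 0 := by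
  -- polarization: the action operators anticommute
  have h2 : ∀ (s t : S) (m : M), ⁅s, ⁅t, m⁆⁆ = -⁅t, ⁅s, m⁆⁆ := by
    intro s t m
    have key := h (s + t) m
    simp only [add_lie, lie_add, h s m, h t m, zero_add, add_zero] at key
    exact eq_neg_of_add_eq_zero_right key
  -- double brackets act trivially
  have key : ∀ (s t u : S) (m : M), ⁅⁅⁅s, t⁆, u⁆, m⁆ = 0 := by
    intro s t u m
    have a1 : ⁅t, ⁅s, ⁅u, m⁆⁆⁆ = -⁅s, ⁅t, ⁅u, m⁆⁆⁆ := h2 t s ⁅u, m⁆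
    have a2 : ⁅u, ⁅s, ⁅t, m⁆⁆⁆ = ⁅s, ⁅t, ⁅u, m⁆⁆⁆ := by
      rw [h2 u s ⁅t, m⁆, h2 u t m, lie_neg, neg_neg]
    have a3 : ⁅u, ⁅t, ⁅s, m⁆⁆⁆ = -⁅s, ⁅t, ⁅u, m⁆⁆⁆ := by
      rw [h2 u t ⁅s, m⁆, h2 u s m, lie_neg, neg_neg, h2 t s ⁅u, m⁆]
    rw [lie_lie, lie_lie, lie_lie s t m, lie_sub, a1, a2, a3]
    abel
  -- the kernel of the action is a Lie ideal
  let I : LieIdeal F S :=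
    { carrier := {x | ∀ m : M, ⁅x, m⁆ = 0}
      add_mem' := by intro a b ha hb m; rw [add_lie, ha, hb, add_zero]
      zero_mem' := by intro m; rw [zero_lie]
      smul_mem' := by intro c a ha m; rw [smul_lie, ha, smul_zero]
      lie_mem := by
        intro y x hx m
        have hx' : ∀ n : M, ⁅x, n⁆ = 0 := hx
        rw [lie_lie, hx' m, hx' ⁅y, m⁆, lie_zero, sub_zero] }
  rcases LieAlgebra.IsSimple.eq_bot_or_eq_top I with hbot | htop
  · -- kernel trivial ⇒ S abelian, contradiction
    exfalso
    apply LieAlgebra.IsSimple.non_abelian (R := F) (L := S)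
    have hzero : ∀ s t : S, ⁅s, t⁆ = 0 := by
      intro s t
      have hmem : ∀ u : S, ⁅⁅s, t⁆, u⁆ = 0 := by
        intro u
        have : ⁅⁅s, t⁆, u⁆ ∈ I := fun m => key s t u m
        rw [hbot] at this
        exact this
      -- so ⁅s,t⁆ is central; center is an ideal, hence ⊥ or ⊤
      rcases LieAlgebra.IsSimple.eq_bot_or_eq_top (LieAlgebra.center F S) with hc | hc
      · have : ⁅s, t⁆ ∈ LieAlgebra.center F S := by
          rw [LieModule.mem_maxTrivSubmodule]
          intro x
          rw [← lie_skew, hmem x, neg_zero]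
        rw [hc] at this
        exact this
      · -- center = ⊤ means abelian: then ⁅s,t⁆ = 0 directly
        have hst : (s : S) ∈ LieAlgebra.center F S := by rw [hc]; trivial
        rw [LieModule.mem_maxTrivSubmodule] at hst
        rw [← lie_skew, hst t, neg_zero]
    exact ⟨hzero⟩
  · intro s m
    have : s ∈ I := by rw [htop]; trivial
    exact this m
end

section
/- Let F be an algebraically closed field and let S be a finite-dimensional simple Lie algebra over F. Let B₁ and B₂ be invariant bilinear forms on S, i.e. bilinear maps B : S × S → F satisfying B([z,x],y) + B(x,[z,y]) = 0 for all x, y, z ∈ S. Then B₁ and B₂ are linearly dependent: there exist scalars a, b ∈ F, not both zero, with a·B₁ + b·B₂ = 0. -/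
/-- Let `F` be an algebraically closed field and let `S` be a finite-dimensional
simple Lie algebra over `F`.  Then any two invariant bilinear forms on `S` are linearly
dependent. -/
theorem stmt_8 {F S : Type*} [Field F] [IsAlgClosed F] [LieRing S] [LieAlgebra F S]
    [FiniteDimensional F S] [LieAlgebra.IsSimple F S]
    (B₁ B₂ : S →ₗ[F] S →ₗ[F] F)
    (hB₁ : ∀ z x y : S, B₁ ⁅z, x⁆ y + B₁ x ⁅z, y⁆ = 0)
    (hB₂ : ∀ z x y : S, B₂ ⁅z, x⁆ y + B₂ x ⁅z, y⁆ = 0) :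
    ∃ a b : F, (a ≠ 0 ∨ b ≠ 0) ∧ a • B₁ + b • B₂ = 0 := by
  have hnontriv : Nontrivial S := by
    by_contra h
    rw [not_nontrivial_iff_subsingleton] at h
    exact LieAlgebra.IsSimple.non_abelian (R := F) (L := S)
      ⟨fun x y => Subsingleton.elim _ _⟩
  by_cases hB1z : B₁ = 0
  · exact ⟨1, 0, Or.inl one_ne_zero, by simp [hB1z]⟩
  -- B₁ is injective as a map S → Dual, since its left kernel is a proper ideal
  have hker : ∀ x : S, B₁ x = 0 → x = 0 := by
    intro x hx
    -- the left radical is an ideal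
    let I : LieIdeal F S :=
      { carrier := {x : S | B₁ x = 0}
        add_mem' := by intro a b ha hb; simp only [Set.mem_setOf_eq] at *; simp [ha, hb]
        zero_mem' := by simp
        smul_mem' := by intro c a ha; simp only [Set.mem_setOf_eq] at *; simp [ha]
        lie_mem := by
          intro z a ha
          simp only [Set.mem_setOf_eq] at *
          ext y
          have := hB₁ z a y
          rw [ha] at this
          simpa using this }
    have hImem : x ∈ I := hx
    rcases LieAlgebra.IsSimple.eq_bot_or_eq_top I with hbot | htop
    · rw [hbot] at hImem; simpa using hImem
    · exfalso
      apply hB1z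
      ext a y
      have : a ∈ I := htop ▸ LieSubmodule.mem_top a
      simpa using LinearMap.congr_fun (this : B₁ a = 0) y
  have hinj : Function.Injective B₁ := by
    rw [injective_iff_map_eq_zero]
    exact fun x hx => hker x hx
  -- B₁ : S ≃ₗ Dual S
  have hfr : Module.finrank F S = Module.finrank F (Module.Dual F S) :=
    (Subspace.dual_finrank_eq).symm
  let e : S ≃ₗ[F] Module.Dual F S := LinearMap.linearEquivOfInjective B₁ hinj hfr
  have he : ∀ x : S, e x = B₁ x := fun x => rfl
  -- A := B₁⁻¹ ∘ B₂
  let A : S →ₗ[F] S := e.symm.toLinearMap ∘ₗ B₂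
  have hA : ∀ x : S, B₁ (A x) = B₂ x := by
    intro x
    show e (e.symm (B₂ x)) = B₂ x
    simp
  -- A commutes with ad
  have hcomm : ∀ z x : S, A ⁅z, x⁆ = ⁅z, A x⁆ := by
    intro z x
    apply hinj
    ext y
    rw [hA]
    have h1 := hB₂ z x y
    have h2 := hB₁ z (A x) y
    rw [hA] at h2
    linear_combination h1 - h2
  -- eigenvalue of A
  obtain ⟨μ, hμ⟩ := Module.End.exists_eigenvalue (K := F) (V := S) A
  obtain ⟨v, hv⟩ := hμ.exists_hasEigenvector
  -- eigenspace of A is an ideal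
  let I : LieIdeal F S :=
    { carrier := {x : S | A x = μ • x}
      add_mem' := by intro a b ha hb; simp only [Set.mem_setOf_eq] at *; simp [ha, hb, smul_add]
      zero_mem' := by simp
      smul_mem' := by
        intro c a ha; simp only [Set.mem_setOf_eq] at *
        rw [map_smul, ha, smul_comm]
      lie_mem := by
        intro z a ha
        simp only [Set.mem_setOf_eq] at *
        rw [hcomm, ha, lie_smul] }
  have hvI : v ∈ I := by
    have := hv.apply_eq_smul
    exact this
  have hItop : I = ⊤ := by
    rcases LieAlgebra.IsSimple.eq_bot_or_eq_top I with hbot | htop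
    · exfalso; rw [hbot] at hvI; exact hv.2 (by simpa using hvI)
    · exact htop
  -- so A = μ • id, hence B₂ = μ • B₁
  refine ⟨μ, -1, Or.inr (by norm_num), ?_⟩
  ext x y
  have hx : A x = μ • x := by
    have hxI : x ∈ I := by rw [hItop]; exact LieSubmodule.mem_top x
    exact hxI
  have := hA x
  rw [hx] at this
  have := LinearMap.congr_fun this y
  simp only [LinearMap.add_apply, LinearMap.smul_apply, LinearMap.zero_apply,
    smul_eq_mul, map_smul, neg_one_mul, neg_smul, one_smul, LinearMap.neg_apply, LinearMap.smul_apply] at this ⊢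
  linear_combination this
end

section
/- Let F be a field and let L be a ℤ-graded Lie algebra over F such that (a) the subalgebra ⊕_{i>0} L_i is generated as a Lie algebra by L_1, and (b) the only ideal of L contained in ⊕_{i<0} L_i is zero. Then for every integer s ≥ 1, every x ∈ L_{-s} with [x, L_1] = 0 is zero. -/
/-! Let `J` be the largest subspace of `L₋ = ⊕_{i<0} Lᵢ` stable under `ad L₁`. It is stable under
`ad` of the subalgebra generated by `L₁`, i.e. of `L₊`. It is also stable under `ad Lⱼ` for
`j ≤ 0`, by descending induction on `j`: if `[L_{j+1}, J] ⊆ J`, then `J + [z, J]` for `z ∈ Lⱼ` is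
again an `ad L₁`-stable subspace of `L₋`, since `[u, [z, m]] = [[u, z], m] + [z, [u, m]]`. Hence `J`
is an ideal inside `L₋`, so `J = 0`; and `x` lies in `J` because `F x` is killed by `ad L₁`. -/

open LieAlgebra

namespace LieAlgebra

variable {R L : Type*} [CommRing R] [LieRing L] [LieAlgebra R L]

/-- The largest subspace of `M` stable under `ad u` for all `u ∈ S`: the vectors that every word in
the operators `ad u` maps into `M`. -/
def adCore (S : Set L) (M : Submodule R L) : Submodule R L :=
  ⨅ T ∈ Algebra.adjoin R (ad R L '' S), M.comap T

attribute [local instance] LieRing.ofAssociativeRing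

variable {S : Set L} {M : Submodule R L}

theorem mem_adCore {m : L} :
    m ∈ adCore S M ↔ ∀ T ∈ Algebra.adjoin R (ad R L '' S), T m ∈ M := by
  simp [adCore]

theorem adCore_le : adCore S M ≤ M := fun _ hm ↦
  mem_adCore.mp hm 1 (Subalgebra.one_mem _)

theorem le_adCore {N : Submodule R L} (hNM : N ≤ M) (hN : ∀ u ∈ S, N ≤ N.comap (ad R L u)) :
    N ≤ adCore S M := by
  intro m hm
  refine mem_adCore.mpr fun T hT ↦ hNM ?_
  induction hT using Algebra.adjoin_induction generalizing m with
  | mem _ hT => obtain ⟨u, hu, rfl⟩ := hT; exact hN u hu hm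
  | algebraMap r => exact N.smul_mem r hm
  | add T T' _ _ hT hT' => exact N.add_mem (hT hm) (hT' hm)
  | mul T T' _ _ hT hT' => exact hT (hT' hm)

theorem ad_mem_adjoin_of_mem_lieSpan {y : L} (hy : y ∈ LieSubalgebra.lieSpan R L S) :
    ad R L y ∈ Algebra.adjoin R (ad R L '' S) := by
  have : LieSubalgebra.lieSpan R L S ≤
      (lieSubalgebraOfSubalgebra R (Module.End R L) (Algebra.adjoin R (ad R L '' S))).comap
        (ad R L) :=
    LieSubalgebra.lieSpan_le.mpr fun u hu ↦ Algebra.subset_adjoin ⟨u, hu, rfl⟩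
  exact this hy

theorem lie_mem_adCore {y m : L} (hy : y ∈ LieSubalgebra.lieSpan R L S) (hm : m ∈ adCore S M) :
    ⁅y, m⁆ ∈ adCore S M :=
  mem_adCore.mpr fun T hT ↦
    mem_adCore.mp hm (T * ad R L y) (Subalgebra.mul_mem _ hT (ad_mem_adjoin_of_mem_lieSpan hy))

end LieAlgebra

section Graded

variable {R L : Type*} [CommRing R] [LieRing L] [LieAlgebra R L] {Lgr : ℤ → Submodule R L}
  (hbracket : ∀ i j : ℤ, ∀ x ∈ Lgr i, ∀ y ∈ Lgr j, ⁅x, y⁆ ∈ Lgr (i + j))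
include hbracket

theorem lie_mem_iSup_lt_zero {j : ℤ} (hj : j ≤ 0) {z m : L} (hz : z ∈ Lgr j)
    (hm : m ∈ ⨆ i < (0 : ℤ), Lgr i) :
    ⁅z, m⁆ ∈ ⨆ i < (0 : ℤ), Lgr i := by
  suffices (⨆ i < (0 : ℤ), Lgr i) ≤ (⨆ i < (0 : ℤ), Lgr i).comap (ad R L z) from this hm
  refine iSup₂_le fun i hi y hy ↦ ?_
  exact le_iSup₂ (f := fun i (_ : i < 0) ↦ Lgr i) (j + i) (by omega) (hbracket j i z hz y hy)

theorem lie_mem_adCore_of_succ {j : ℤ} (hj : j ≤ 0)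
    (hsucc : ∀ y ∈ Lgr (j + 1), ∀ m ∈ adCore (Lgr 1) (⨆ i < (0 : ℤ), Lgr i),
      ⁅y, m⁆ ∈ adCore (Lgr 1) (⨆ i < (0 : ℤ), Lgr i))
    {z m : L} (hz : z ∈ Lgr j) (hm : m ∈ adCore (Lgr 1) (⨆ i < (0 : ℤ), Lgr i)) :
    ⁅z, m⁆ ∈ adCore (Lgr 1) (⨆ i < (0 : ℤ), Lgr i) := by
  set J := adCore (Lgr 1) (⨆ i < (0 : ℤ), Lgr i)
  have hJ1 : ∀ u ∈ Lgr 1, ∀ m ∈ J, ⁅u, m⁆ ∈ J := fun u hu _ hm ↦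
    lie_mem_adCore (LieSubalgebra.subset_lieSpan hu) hm
  suffices J ⊔ J.map (ad R L z) ≤ J from this (Submodule.mem_sup_right ⟨m, hm, rfl⟩)
  refine le_adCore (sup_le adCore_le ?_) fun u hu ↦ sup_le ?_ ?_
  · exact Submodule.map_le_iff_le_comap.mpr fun m hm ↦
      lie_mem_iSup_lt_zero hbracket hj hz (adCore_le hm)
  · exact fun m hm ↦ Submodule.mem_sup_left (hJ1 u hu m hm)
  · rintro _ ⟨m, hm, rfl⟩
    have hleibniz : ⁅u, ⁅z, m⁆⁆ = ⁅⁅u, z⁆, m⁆ + ⁅z, ⁅u, m⁆⁆ := leibniz_lie u z m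
    have huz : ⁅u, z⁆ ∈ Lgr (j + 1) := add_comm 1 j ▸ hbracket 1 j u hu z hz
    simp only [Submodule.mem_comap, ad_apply, hleibniz]
    exact Submodule.add_mem_sup (hsucc _ huz m hm) ⟨_, hJ1 u hu m hm, rfl⟩

theorem lie_mem_adCore_of_le_zero {j : ℤ} (hj : j ≤ 0) {z m : L} (hz : z ∈ Lgr j)
    (hm : m ∈ adCore (Lgr 1) (⨆ i < (0 : ℤ), Lgr i)) :
    ⁅z, m⁆ ∈ adCore (Lgr 1) (⨆ i < (0 : ℤ), Lgr i) := by
  induction j, hj using Int.leInductionDown generalizing z m with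
  | base =>
    exact lie_mem_adCore_of_succ hbracket le_rfl
      (fun _ hy _ hm ↦ lie_mem_adCore (LieSubalgebra.subset_lieSpan hy) hm) hz hm
  | pred n hn ih =>
    exact lie_mem_adCore_of_succ hbracket (by omega)
      (fun _ hy _ hm ↦ ih (by rwa [sub_add_cancel] at hy) hm) hz hm

theorem lie_mem_adCore_of_iSup_eq_top (htop : ⨆ i, Lgr i = ⊤)
    (hpos : ∀ i > 0, Lgr i ≤ (LieSubalgebra.lieSpan R L (Lgr 1 : Set L)).toSubmodule)
    (y : L) {m : L} (hm : m ∈ adCore (Lgr 1) (⨆ i < (0 : ℤ), Lgr i)) :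
    ⁅y, m⁆ ∈ adCore (Lgr 1) (⨆ i < (0 : ℤ), Lgr i) := by
  have hy : y ∈ ⨆ i, Lgr i := htop ▸ Submodule.mem_top
  induction hy using Submodule.iSup_induction' with
  | mem i z hz =>
    rcases le_or_gt i 0 with hi | hi
    · exact lie_mem_adCore_of_le_zero hbracket hi hz hm
    · exact lie_mem_adCore (hpos i hi hz) hm
  | zero => simpa only [zero_lie] using Submodule.zero_mem _
  | add a b _ _ ha hb => simpa only [add_lie] using Submodule.add_mem _ ha hb

end Graded

/-- Let `F` be a field and let `L` be a `ℤ`-graded Lie algebra over `F` such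
that (a) the subalgebra `⊕_{i>0} Lᵢ` is generated as a Lie algebra by `L₁`, and (b) the only ideal
of `L` contained in `⊕_{i<0} Lᵢ` is zero.  Then for every integer `s ≥ 1`, every `x ∈ L₋ₛ` with
`[x, L₁] = 0` is zero. -/
theorem stmt_10 {F L : Type*} [Field F] [LieRing L] [LieAlgebra F L]
    (Lgr : ℤ → Submodule F L)
    (hdirect : DirectSum.IsInternal Lgr)
    (hbracket : ∀ i j : ℤ, ∀ x ∈ Lgr i, ∀ y ∈ Lgr j, ⁅x, y⁆ ∈ Lgr (i + j))
    (hgenpos : (LieSubalgebra.lieSpan F L (Lgr 1 : Set L)).toSubmodule = ⨆ i > (0 : ℤ), Lgr i)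
    (hrad : ∀ J : LieIdeal F L, (J : Submodule F L) ≤ ⨆ i < (0 : ℤ), Lgr i → J = ⊥) :
    ∀ s : ℤ, 1 ≤ s → ∀ x ∈ Lgr (-s), (∀ y ∈ Lgr 1, ⁅x, y⁆ = 0) → x = 0 := by
  intro s hs x hx hxcomm
  have hpos : ∀ i > 0, Lgr i ≤ (LieSubalgebra.lieSpan F L (Lgr 1 : Set L)).toSubmodule := by
    intro i hi
    rw [hgenpos]
    exact le_iSup₂ (f := fun i (_ : i > 0) ↦ Lgr i) i hi
  let J : LieIdeal F L :=
    { toSubmodule := adCore (Lgr 1) (⨆ i < (0 : ℤ), Lgr i)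
      lie_mem := fun {y _} hm ↦
        lie_mem_adCore_of_iSup_eq_top hbracket hdirect.submodule_iSup_eq_top hpos y hm }
  have hxneg : x ∈ ⨆ i < (0 : ℤ), Lgr i :=
    le_iSup₂ (f := fun i (_ : i < 0) ↦ Lgr i) (-s) (by omega) hx
  have hxJ : F ∙ x ≤ adCore (Lgr 1) (⨆ i < (0 : ℤ), Lgr i) := by
    refine le_adCore ((Submodule.span_singleton_le_iff_mem _ _).mpr hxneg) fun u hu ↦ ?_
    rw [Submodule.span_singleton_le_iff_mem, Submodule.mem_comap, ad_apply, ← lie_skew,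
      hxcomm u hu, neg_zero]
    exact zero_mem _
  have hJ : J = ⊥ := hrad J adCore_le
  have : x ∈ J := hxJ (Submodule.mem_span_singleton_self x)
  simpa [hJ] using this
end

section
/- Let F be a field and let L be a transitive ℤ-graded Lie algebra over F satisfying L_{-i} = [L_{-1}, L_{-i+1}] for all i > 1. Let V ⊆ L_1 be an L_0-submodule (an F-subspace with [L_0, V] ⊆ V), and let L' be the Lie subalgebra of L generated by L_{-1} + L_0 + V. Then L' is a graded subalgebra, i.e. L' = ⊕_{i∈ℤ} (L' ∩ L_i); moreover L' ∩ L_i = L_i for every i ≤ 0, L' ∩ L_1 = V, and L', with the grading L'_i = L' ∩ L_i, is again transitive. -/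
/-!
The Lie subalgebra generated by homogeneous elements is graded, and since `L₋ᵢ = [L₋₁, L₋ᵢ₊₁]`
it contains every `Lᵢ` with `i ≤ 0`; transitivity of `L'` is then inherited from `L`.
For `L' ∩ L₁ = V`, consider the spaces `Lᵢ` (`i ≤ 0`), `V`, `[V, V]`, `[V, [V, V]]`, …:
their sum is stable under bracketing with `L₋₁` (Jacobi identity and `[L₀, V] ⊆ V`), with `L₀`
and with `V`, so it contains `L'`, and its degree-one part is `V` because the grading is direct.
-/

theorem iSupIndep.iSup_inf_eq_of_le {ι α : Type*} [CompleteLattice α] [IsModularLattice α]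
    {t s : ι → α} (ht : iSupIndep t) (hst : ∀ i, s i ≤ t i) (j : ι) :
    (⨆ i, s i) ⊓ t j = s j := by
  have hdisj : (⨆ (i) (_ : i ≠ j), s i) ⊓ t j = ⊥ :=
    ((ht j).symm.mono_left (iSup₂_mono fun i _ => hst i)).eq_bot
  rw [iSup_split_single s j, sup_inf_assoc_of_le _ (hst j), hdisj, sup_bot_eq]

section LieSpan

variable {R L : Type*} [CommRing R] [LieRing L] [LieAlgebra R L]

theorem Submodule.lie_mem_iSup {ι : Type*} {p : ι → Submodule R L} {x y : L}
    (hx : ∀ i, ∀ z ∈ p i, ∃ j, ⁅x, z⁆ ∈ p j) (hy : y ∈ ⨆ i, p i) : ⁅x, y⁆ ∈ ⨆ i, p i := by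
  refine Submodule.iSup_induction p (motive := fun y => ⁅x, y⁆ ∈ ⨆ i, p i) hy ?_ ?_ ?_
  · intro i z hz
    obtain ⟨j, hj⟩ := hx i z hz
    exact Submodule.mem_iSup_of_mem j hj
  · rw [lie_zero]; exact zero_mem _
  · intro a b ha hb; rw [lie_add]; exact add_mem ha hb

/-- The elements `x ∈ K` with `⁅x, K⁆ ⊆ K` form a Lie subalgebra, by the Jacobi identity. -/
theorem LieSubalgebra.toSubmodule_lieSpan_le_of_lie_mem {s : Set L} {K : Submodule R L}
    (hsK : s ⊆ K) (hK : ∀ x ∈ s, ∀ y ∈ K, ⁅x, y⁆ ∈ K) :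
    (lieSpan R L s).toSubmodule ≤ K := by
  let J : LieSubalgebra R L :=
    { carrier := {x | x ∈ K ∧ ∀ y ∈ K, ⁅x, y⁆ ∈ K}
      add_mem' := fun ha hb => ⟨add_mem ha.1 hb.1, fun y hy => by
        rw [add_lie]; exact add_mem (ha.2 y hy) (hb.2 y hy)⟩
      zero_mem' := ⟨zero_mem K, fun y _ => by rw [zero_lie]; exact zero_mem K⟩
      smul_mem' := fun c x hx => ⟨K.smul_mem c hx.1, fun y hy => by
        rw [smul_lie]; exact K.smul_mem c (hx.2 y hy)⟩
      lie_mem' := fun {x y} hx hy => ⟨hx.2 y hy.1, fun z hz => by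
        rw [lie_lie]; exact sub_mem (hx.2 _ (hy.2 z hz)) (hy.2 _ (hx.2 z hz))⟩ }
  exact fun x hx => (lieSpan_le (K := J) |>.2 (fun x hx => ⟨hsK hx, hK x hx⟩) hx).1

end LieSpan

namespace GradedLieAlgebra

variable {R L : Type*} [CommRing R] [LieRing L] [LieAlgebra R L]

theorem lieSpan_eq_iSup_inf {ι : Type*} [Add ι] (Lgr : ι → Submodule R L)
    (hbracket : ∀ i j : ι, ∀ x ∈ Lgr i, ∀ y ∈ Lgr j, ⁅x, y⁆ ∈ Lgr (i + j))
    {s : Set L} (hs : s ⊆ ⋃ i, (Lgr i : Set L)) :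
    (LieSubalgebra.lieSpan R L s).toSubmodule =
      ⨆ i, (LieSubalgebra.lieSpan R L s).toSubmodule ⊓ Lgr i := by
  set A := LieSubalgebra.lieSpan R L s
  have hsA : ∀ x ∈ s, ∃ i, x ∈ A.toSubmodule ⊓ Lgr i := fun x hx => by
    obtain ⟨i, hi⟩ := Set.mem_iUnion.1 (hs hx)
    exact ⟨i, LieSubalgebra.subset_lieSpan hx, hi⟩
  refine le_antisymm (LieSubalgebra.toSubmodule_lieSpan_le_of_lie_mem ?_ ?_)
    (iSup_le fun _ => inf_le_left)
  · intro x hx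
    obtain ⟨i, hi⟩ := hsA x hx
    exact Submodule.mem_iSup_of_mem i hi
  · intro x hx y hy
    obtain ⟨i, hxA, hxi⟩ := hsA x hx
    exact Submodule.lie_mem_iSup
      (fun j z hz => ⟨i + j, A.lie_mem hxA hz.1, hbracket i j x hxi z hz.2⟩) hy

variable (Lgr : ℤ → Submodule R L)

theorem le_lieSubalgebra_of_nonpos
    (hgen : ∀ i : ℤ, 1 < i →
      Lgr (-i) = Submodule.span R {m | ∃ x ∈ Lgr (-1), ∃ y ∈ Lgr (-i + 1), m = ⁅x, y⁆})
    {A : LieSubalgebra R L} (hneg_one : Lgr (-1) ≤ A.toSubmodule) (hzero : Lgr 0 ≤ A.toSubmodule) :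
    ∀ i ≤ 0, Lgr i ≤ A.toSubmodule := by
  have hneg : ∀ i ≤ -1, Lgr i ≤ A.toSubmodule := by
    refine Int.leInductionDown hneg_one fun i hi ih => ?_
    have hgen_i := hgen (1 - i) (by lia)
    rw [neg_sub, sub_add_cancel] at hgen_i
    rw [hgen_i, Submodule.span_le]
    rintro _ ⟨x, hx, y, hy, rfl⟩
    exact A.lie_mem (hneg_one hx) (ih hy)
  intro i hi
  rcases hi.lt_or_eq with hi | rfl
  · exact hneg i (by lia)
  · exact hzero

variable (V : Submodule R L)

/-- The homogeneous components of the Lie subalgebra generated by `L₋₁ + L₀ + V`. -/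
def generatedPiece (i : ℤ) : Submodule R L :=
  if i ≤ 0 then Lgr i
  else if i = 1 then V
  else Submodule.map₂ (LieAlgebra.ad R L : L →ₗ[R] Module.End R L) V (generatedPiece (i - 1))
termination_by i.toNat
decreasing_by lia

theorem generatedPiece_of_nonpos {i : ℤ} (hi : i ≤ 0) : generatedPiece Lgr V i = Lgr i := by
  rw [generatedPiece, if_pos hi]

theorem generatedPiece_one : generatedPiece Lgr V 1 = V := by
  rw [generatedPiece]; rfl

theorem generatedPiece_add_one {i : ℤ} (hi : 1 ≤ i) :
    generatedPiece Lgr V (i + 1) =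
      Submodule.map₂ (LieAlgebra.ad R L : L →ₗ[R] Module.End R L) V (generatedPiece Lgr V i) := by
  rw [generatedPiece, if_neg (by lia), if_neg (by lia), add_sub_cancel_right]

variable {Lgr V}

theorem lie_mem_map₂_ad {W : Submodule R L} {v w : L} (hv : v ∈ V) (hw : w ∈ W) :
    ⁅v, w⁆ ∈ Submodule.map₂ (LieAlgebra.ad R L : L →ₗ[R] Module.End R L) V W :=
  Submodule.apply_mem_map₂ _ hv hw

theorem map₂_ad_le_iff {W p : Submodule R L} :
    Submodule.map₂ (LieAlgebra.ad R L : L →ₗ[R] Module.End R L) V W ≤ p ↔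
      ∀ v ∈ V, ∀ w ∈ W, ⁅v, w⁆ ∈ p := by
  simp [Submodule.map₂_le]

theorem lie_mem_of_mem_map₂_ad {W p : Submodule R L} {z : L}
    (h : ∀ v ∈ V, ∀ w ∈ W, ⁅z, ⁅v, w⁆⁆ ∈ p) :
    ∀ y ∈ Submodule.map₂ (LieAlgebra.ad R L : L →ₗ[R] Module.End R L) V W, ⁅z, y⁆ ∈ p :=
  fun _ hy => (map₂_ad_le_iff (p := p.comap (LieAlgebra.ad R L z))).2 (by simpa using h) hy

theorem generatedPiece_le
    (hbracket : ∀ i j : ℤ, ∀ x ∈ Lgr i, ∀ y ∈ Lgr j, ⁅x, y⁆ ∈ Lgr (i + j))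
    (hV1 : V ≤ Lgr 1) (i : ℤ) : generatedPiece Lgr V i ≤ Lgr i := by
  rcases le_or_gt i 0 with hi | hi
  · rw [generatedPiece_of_nonpos Lgr V hi]
  refine Int.leInduction (m := 1) ?_ (fun i hi ih => ?_) i hi
  · rwa [generatedPiece_one]
  · rw [generatedPiece_add_one Lgr V hi, map₂_ad_le_iff]
    intro v hv y hy
    rw [add_comm]
    exact hbracket 1 i v (hV1 hv) y (ih hy)

theorem lie_mem_generatedPiece_of_mem_zero
    (hbracket : ∀ i j : ℤ, ∀ x ∈ Lgr i, ∀ y ∈ Lgr j, ⁅x, y⁆ ∈ Lgr (i + j))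
    (hVmod : ∀ z ∈ Lgr 0, ∀ v ∈ V, ⁅z, v⁆ ∈ V) {z : L} (hz : z ∈ Lgr 0) (i : ℤ) :
    ∀ y ∈ generatedPiece Lgr V i, ⁅z, y⁆ ∈ generatedPiece Lgr V i := by
  rcases le_or_gt i 0 with hi | hi
  · rw [generatedPiece_of_nonpos Lgr V hi]
    simpa using hbracket 0 i z hz
  refine Int.leInduction (m := 1) ?_ (fun i hi ih => ?_) i hi
  · rw [generatedPiece_one]; exact hVmod z hz
  · rw [generatedPiece_add_one Lgr V hi]
    refine lie_mem_of_mem_map₂_ad fun v hv w hw => ?_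
    rw [leibniz_lie]
    exact add_mem (lie_mem_map₂_ad (hVmod z hz v hv) hw) (lie_mem_map₂_ad hv (ih w hw))

theorem lie_mem_generatedPiece_add_one
    (hbracket : ∀ i j : ℤ, ∀ x ∈ Lgr i, ∀ y ∈ Lgr j, ⁅x, y⁆ ∈ Lgr (i + j))
    (hV1 : V ≤ Lgr 1) (hVmod : ∀ z ∈ Lgr 0, ∀ v ∈ V, ⁅z, v⁆ ∈ V) {v : L} (hv : v ∈ V) (i : ℤ) :
    ∀ y ∈ generatedPiece Lgr V i, ⁅v, y⁆ ∈ generatedPiece Lgr V (i + 1) := by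
  intro y hy
  rcases lt_trichotomy i 0 with hi | rfl | hi
  · rw [generatedPiece_of_nonpos Lgr V hi.le] at hy
    rw [generatedPiece_of_nonpos Lgr V (by lia), add_comm]
    exact hbracket 1 i v (hV1 hv) y hy
  · rw [generatedPiece_of_nonpos Lgr V le_rfl] at hy
    rw [zero_add, generatedPiece_one, ← lie_skew]
    exact neg_mem (hVmod y hy v hv)
  · rw [generatedPiece_add_one Lgr V hi]
    exact lie_mem_map₂_ad hv hy

theorem lie_mem_generatedPiece_of_mem_neg_one
    (hbracket : ∀ i j : ℤ, ∀ x ∈ Lgr i, ∀ y ∈ Lgr j, ⁅x, y⁆ ∈ Lgr (i + j))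
    (hV1 : V ≤ Lgr 1) (hVmod : ∀ z ∈ Lgr 0, ∀ v ∈ V, ⁅z, v⁆ ∈ V) {w : L} (hw : w ∈ Lgr (-1))
    (i : ℤ) : ∀ y ∈ generatedPiece Lgr V i, ⁅w, y⁆ ∈ generatedPiece Lgr V (i - 1) := by
  rcases le_or_gt i 0 with hi | hi
  · rw [generatedPiece_of_nonpos Lgr V hi, generatedPiece_of_nonpos Lgr V (by lia),
      sub_eq_neg_add]
    exact hbracket (-1) i w hw
  refine Int.leInduction (m := 1) ?_ (fun i hi ih => ?_) i hi
  · rw [generatedPiece_one, sub_self, generatedPiece_of_nonpos Lgr V le_rfl]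
    exact fun y hy => by simpa using hbracket (-1) 1 w hw y (hV1 hy)
  · rw [generatedPiece_add_one Lgr V hi, add_sub_cancel_right]
    refine lie_mem_of_mem_map₂_ad fun v hv y hy => ?_
    have hwv : ⁅w, v⁆ ∈ Lgr 0 := by simpa using hbracket (-1) 1 w hw v (hV1 hv)
    rw [leibniz_lie]
    refine add_mem (lie_mem_generatedPiece_of_mem_zero hbracket hVmod hwv i y hy) ?_
    simpa using lie_mem_generatedPiece_add_one hbracket hV1 hVmod hv (i - 1) _ (ih y hy)

theorem toSubmodule_lieSpan_le_iSup_generatedPiece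
    (hbracket : ∀ i j : ℤ, ∀ x ∈ Lgr i, ∀ y ∈ Lgr j, ⁅x, y⁆ ∈ Lgr (i + j))
    (hV1 : V ≤ Lgr 1) (hVmod : ∀ z ∈ Lgr 0, ∀ v ∈ V, ⁅z, v⁆ ∈ V) :
    (LieSubalgebra.lieSpan R L ((Lgr (-1) : Set L) ∪ (Lgr 0 : Set L) ∪ (V : Set L))).toSubmodule ≤
      ⨆ i, generatedPiece Lgr V i := by
  have hmem : ∀ i, ∀ x ∈ generatedPiece Lgr V i, x ∈ ⨆ i, generatedPiece Lgr V i :=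
    fun i _ hx => Submodule.mem_iSup_of_mem i hx
  refine LieSubalgebra.toSubmodule_lieSpan_le_of_lie_mem ?_ fun x hx y hy => ?_
  · rintro x ((hx | hx) | hx)
    · exact hmem (-1) x (by rwa [generatedPiece_of_nonpos Lgr V (by lia)])
    · exact hmem 0 x (by rwa [generatedPiece_of_nonpos Lgr V le_rfl])
    · exact hmem 1 x (by rwa [generatedPiece_one])
  · refine Submodule.lie_mem_iSup (fun i z hz => ?_) hy
    rcases hx with (hx | hx) | hx
    · exact ⟨i - 1, lie_mem_generatedPiece_of_mem_neg_one hbracket hV1 hVmod hx i z hz⟩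
    · exact ⟨i, lie_mem_generatedPiece_of_mem_zero hbracket hVmod hx i z hz⟩
    · exact ⟨i + 1, lie_mem_generatedPiece_add_one hbracket hV1 hVmod hx i z hz⟩

end GradedLieAlgebra

open GradedLieAlgebra in
/-- Let `F` be a field and let `L` be a transitive `ℤ`-graded Lie algebra over
`F` satisfying `L₋ᵢ = [L₋₁, L₋ᵢ₊₁]` for all `i > 1`.  Let `V ⊆ L₁` be an `L₀`-submodule and let
`L'` be the Lie subalgebra of `L` generated by `L₋₁ + L₀ + V`.  Then `L'` is a graded subalgebra,
`L' ∩ Lᵢ = Lᵢ` for every `i ≤ 0`, `L' ∩ L₁ = V`, and `L'`, with the grading `L'ᵢ = L' ∩ Lᵢ`, is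
again transitive. -/
theorem stmt_11 {F L : Type*} [Field F] [LieRing L] [LieAlgebra F L]
    (Lgr : ℤ → Submodule F L)
    (hdirect : DirectSum.IsInternal Lgr)
    (hbracket : ∀ i j : ℤ, ∀ x ∈ Lgr i, ∀ y ∈ Lgr j, ⁅x, y⁆ ∈ Lgr (i + j))
    (htrans : ∀ i : ℤ, 0 ≤ i → ∀ x ∈ Lgr i, (∀ y ∈ Lgr (-1), ⁅x, y⁆ = 0) → x = 0)
    (hgen : ∀ i : ℤ, 1 < i →
      Lgr (-i) = Submodule.span F {m | ∃ x ∈ Lgr (-1), ∃ y ∈ Lgr (-i + 1), m = ⁅x, y⁆})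
    (V : Submodule F L) (hV1 : V ≤ Lgr 1)
    (hVmod : ∀ z ∈ Lgr 0, ∀ v ∈ V, ⁅z, v⁆ ∈ V)
    (L' : LieSubalgebra F L)
    (hL' : L' = LieSubalgebra.lieSpan F L ((Lgr (-1) : Set L) ∪ (Lgr 0 : Set L) ∪ (V : Set L))) :
    (L'.toSubmodule = ⨆ i : ℤ, L'.toSubmodule ⊓ Lgr i) ∧
      (∀ i : ℤ, i ≤ 0 → L'.toSubmodule ⊓ Lgr i = Lgr i) ∧
      (L'.toSubmodule ⊓ Lgr 1 = V) ∧
      (∀ i : ℤ, 0 ≤ i → ∀ x ∈ L'.toSubmodule ⊓ Lgr i,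
        (∀ y ∈ L'.toSubmodule ⊓ Lgr (-1), ⁅x, y⁆ = 0) → x = 0) := by
  have hS : (Lgr (-1) : Set L) ∪ Lgr 0 ∪ V ⊆ L' := hL' ▸ LieSubalgebra.subset_lieSpan
  have hnonpos : ∀ i ≤ 0, Lgr i ≤ L'.toSubmodule :=
    le_lieSubalgebra_of_nonpos Lgr hgen (fun x hx => hS (Or.inl (Or.inl hx)))
      (fun x hx => hS (Or.inl (Or.inr hx)))
  refine ⟨?_, fun i hi => inf_eq_right.2 (hnonpos i hi), ?_, ?_⟩
  · rw [hL']
    refine lieSpan_eq_iSup_inf Lgr hbracket ?_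
    rintro x ((hx | hx) | hx)
    · exact Set.mem_iUnion_of_mem (-1) hx
    · exact Set.mem_iUnion_of_mem 0 hx
    · exact Set.mem_iUnion_of_mem 1 (hV1 hx)
  · refine le_antisymm ?_ (le_inf (fun x hx => hS (Or.inr hx)) hV1)
    calc L'.toSubmodule ⊓ Lgr 1 ≤ (⨆ i, generatedPiece Lgr V i) ⊓ Lgr 1 :=
          inf_le_inf_right _ (hL' ▸ toSubmodule_lieSpan_le_iSup_generatedPiece hbracket hV1 hVmod)
      _ = generatedPiece Lgr V 1 :=
          hdirect.submodule_iSupIndep.iSup_inf_eq_of_le (generatedPiece_le hbracket hV1) 1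
      _ = V := generatedPiece_one Lgr V
  · intro i hi x hx hx'
    exact htrans i hi x hx.2 fun y hy => hx' y ⟨hnonpos (-1) (by norm_num) hy, hy⟩
end
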